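/- arXiv:1911.07114 — 8 statements merged into one kernel-verified Lean document; each statement's English description precedes it below -/
import Mathlib

section
/- Let 0 < β < 1, 𝔼 > 0, t > 0, and let g : [0, t] → ℝ be continuous. Then ∫₀^∞ Ẽ_β(z) · (∫₀^t exp(−(t − s)/z) g(s) ds) dz = (𝔼 / Γ(1 − β)) · ∫₀^t g(s) · (t − s)^{−β} ds, where Ẽ_β(z) = 𝔼 / (Γ(1 − β) Γ(β) z^{β+1}). In particular, when g = ε′ is the derivative of a strain history ε, the left-hand side equals 𝔼 times the left-sided Caputo fractional derivative of ε of order β at t. -/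
open MeasureTheory Set

section Aux
open Real

lemma key_int {β : ℝ} (hβ0 : 0 < β) {a : ℝ} (ha : 0 < a) :
    IntegrableOn (fun z : ℝ => z ^ (-(β + 1)) * Real.exp (-a / z)) (Ioi 0) ∧
    ∫ z in Ioi (0:ℝ), z ^ (-(β + 1)) * Real.exp (-a / z)
      = Real.Gamma β * a ^ (-β) := by
  set f : ℝ → ℝ := fun y => y ^ (β - 1) * Real.exp (-(a * y)) with hf
  have hf_int : IntegrableOn f (Ioi 0) := by
    have := integrableOn_rpow_mul_exp_neg_mul_rpow (p := 1) (s := β - 1) (b := a)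
      (by linarith) one_pos ha
    refine this.congr_fun (fun x hx => ?_) measurableSet_Ioi
    simp [hf, Real.rpow_one]
  have hf_val : ∫ y in Ioi (0:ℝ), f y = (1 / a) ^ β * Real.Gamma β :=
    integral_rpow_mul_exp_neg_mul_Ioi hβ0 ha
  have hpt : ∀ x ∈ Ioi (0:ℝ),
      (|(-1:ℝ)| * x ^ ((-1:ℝ) - 1)) • f (x ^ (-1:ℝ))
        = x ^ (-(β + 1)) * Real.exp (-a / x) := by
    intro x hx
    have hx0 : (0:ℝ) < x := hx
    have h1 : (x ^ (-1:ℝ)) ^ (β - 1) = x ^ ((-1) * (β - 1)) := by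
      rw [← Real.rpow_mul hx0.le]
    have h2 : x ^ ((-1:ℝ) - 1) * x ^ ((-1:ℝ) * (β - 1)) = x ^ (-(β + 1)) := by
      rw [← Real.rpow_add hx0]; ring_nf
    have h3 : -(a * x ^ (-1:ℝ)) = -a / x := by
      rw [Real.rpow_neg_one]; rw [neg_div]; rw [div_eq_mul_inv]
    simp only [hf, smul_eq_mul, abs_neg, abs_one, one_mul, h1, h3]
    rw [← mul_assoc, h2]
  have hcomp := integrableOn_Ioi_comp_rpow_iff
    (fun y => f y) (p := (-1:ℝ)) (by norm_num)
  constructor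
  · exact (hcomp.mpr hf_int).congr_fun hpt measurableSet_Ioi
  · have := integral_comp_rpow_Ioi f (p := (-1:ℝ)) (by norm_num)
    rw [← setIntegral_congr_fun measurableSet_Ioi hpt, this, hf_val,
      one_div, Real.inv_rpow ha.le, ← Real.rpow_neg ha.le, mul_comm]

lemma stmt_main (β E t : ℝ) (hβ : β ∈ Set.Ioo (0 : ℝ) 1) (hE : 0 < E) (ht : 0 < t)
    (g : ℝ → ℝ) (hg : ContinuousOn g (Set.Icc 0 t)) :
    (∫ z in Set.Ioi (0 : ℝ),
        (E / (Real.Gamma (1 - β) * Real.Gamma β * z ^ (β + 1))) *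
          ∫ s in (0 : ℝ)..t, Real.exp (-(t - s) / z) * g s)
      = (E / Real.Gamma (1 - β)) * ∫ s in (0 : ℝ)..t, g s * (t - s) ^ (-β) := by
  obtain ⟨hβ0, hβ1⟩ := hβ
  have hΓβ : 0 < Real.Gamma β := Real.Gamma_pos_of_pos hβ0
  have hΓ1β : 0 < Real.Gamma (1 - β) := Real.Gamma_pos_of_pos (by linarith)
  set C : ℝ := E / (Real.Gamma (1 - β) * Real.Gamma β) with hC
  set F : ℝ → ℝ → ℝ :=
    fun z s => z ^ (-(β + 1)) * (Real.exp (-(t - s) / z) * g s) with hFdef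
  -- measure abbreviations
  set μ : Measure ℝ := volume.restrict (Ioi (0:ℝ)) with hμ
  set ν : Measure ℝ := volume.restrict (Ioc (0:ℝ) t) with hν
  -- bound for g
  obtain ⟨M, hM⟩ : ∃ M, ∀ s ∈ Icc (0:ℝ) t, ‖g s‖ ≤ M :=
    isCompact_Icc.exists_bound_of_continuousOn hg
  have hgm : AEStronglyMeasurable g ν :=
    (hg.mono Ioc_subset_Icc_self).aestronglyMeasurable measurableSet_Ioc
  -- a.e. membership in Ioo
  have haeIoo : ∀ᵐ s ∂ν, s ∈ Ioo (0:ℝ) t := by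
    rw [hν, ← Measure.restrict_congr_set Ioo_ae_eq_Ioc]
    exact ae_restrict_mem measurableSet_Ioo
  -- integrability of (t - s) ^ (-β) on Ioc 0 t
  have htpow : IntegrableOn (fun s : ℝ => (t - s) ^ (-β)) (Ioc 0 t) := by
    have h1 : IntervalIntegrable (fun x : ℝ => x ^ (-β)) volume 0 t :=
      intervalIntegral.intervalIntegrable_rpow' (by linarith)
    have h2 := h1.comp_sub_left t
    simp only [sub_self, sub_zero] at h2
    exact (intervalIntegrable_iff_integrableOn_Ioc_of_le ht.le).mp h2.symm
  -- strong measurability of the uncurried function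
  have hFm : AEStronglyMeasurable (fun p : ℝ × ℝ => F p.1 p.2) (μ.prod ν) := by
    have h1 : Measurable fun p : ℝ × ℝ => p.1 ^ (-(β + 1)) :=
      measurable_fst.pow measurable_const
    have h2 : Measurable fun p : ℝ × ℝ => Real.exp (-(t - p.2) / p.1) :=
      (((measurable_const.sub measurable_snd).neg).div measurable_fst).exp
    exact h1.aestronglyMeasurable.mul (h2.aestronglyMeasurable.mul hgm.comp_snd)
  -- integrability on the product
  have hFint : Integrable (fun p : ℝ × ℝ => F p.1 p.2) (μ.prod ν) := by
    rw [integrable_prod_iff' hFm]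
    constructor
    · filter_upwards [haeIoo] with s hs
      have ha : 0 < t - s := by linarith [hs.2]
      have := ((key_int hβ0 ha).1.mul_const (g s))
      refine this.congr (Filter.Eventually.of_forall fun z => ?_)
      simp [hFdef, mul_assoc]
    · have hnorm : ∀ᵐ s ∂ν, (∫ z, ‖F z s‖ ∂μ)
          = (Real.Gamma β * (t - s) ^ (-β)) * ‖g s‖ := by
        filter_upwards [haeIoo] with s hs
        have ha : 0 < t - s := by linarith [hs.2]
        have heq : ∀ z ∈ Ioi (0:ℝ),
            ‖F z s‖ = (z ^ (-(β + 1)) * Real.exp (-(t - s) / z)) * ‖g s‖ := by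
          intro z hz
          have hz0 : (0:ℝ) < z := hz
          simp only [hFdef, norm_mul, Real.norm_eq_abs,
            abs_of_pos (Real.rpow_pos_of_pos hz0 _), abs_of_pos (Real.exp_pos _)]
          ring
        rw [hμ, setIntegral_congr_fun measurableSet_Ioi heq,
          integral_mul_const, (key_int hβ0 ha).2]
      have hbase : Integrable (fun s : ℝ => (Real.Gamma β * M) * (t - s) ^ (-β)) ν :=
        (htpow.const_mul _)
      have hRHS : Integrable (fun s : ℝ => Real.Gamma β * (t - s) ^ (-β) * ‖g s‖) ν := by
        refine hbase.mono' ?_ ?_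
        · exact (Measurable.aestronglyMeasurable
            (measurable_const.mul
              ((measurable_const.sub measurable_id').pow measurable_const))).mul hgm.norm
        · filter_upwards [ae_restrict_mem measurableSet_Ioc] with s hs
          have h1 : (0:ℝ) ≤ (t - s) ^ (-β) := Real.rpow_nonneg (by linarith [hs.2]) _
          have h2 : ‖g s‖ ≤ M := hM s ⟨hs.1.le, hs.2⟩
          have h3 : (0:ℝ) ≤ ‖g s‖ := norm_nonneg _
          rw [Real.norm_eq_abs, abs_of_nonneg (by positivity)]
          calc Real.Gamma β * (t - s) ^ (-β) * ‖g s‖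
              ≤ Real.Gamma β * (t - s) ^ (-β) * M := by
                apply mul_le_mul_of_nonneg_left h2; positivity
            _ = Real.Gamma β * M * (t - s) ^ (-β) := by ring
      refine hRHS.congr ?_
      filter_upwards [hnorm] with s h
      exact h.symm
  -- rewrite LHS as constant times double integral
  have hLHS : (∫ z in Set.Ioi (0 : ℝ),
        (E / (Real.Gamma (1 - β) * Real.Gamma β * z ^ (β + 1))) *
          ∫ s in (0 : ℝ)..t, Real.exp (-(t - s) / z) * g s)
      = C * ∫ z, (∫ s, F z s ∂ν) ∂μ := by
    rw [← integral_const_mul]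
    refine setIntegral_congr_fun measurableSet_Ioi fun z hz => ?_
    have hz0 : (0:ℝ) < z := hz
    have hcoef : E / (Real.Gamma (1 - β) * Real.Gamma β * z ^ (β + 1))
        = C * z ^ (-(β + 1)) := by
      rw [Real.rpow_neg hz0.le, hC, div_mul_eq_div_div, div_eq_mul_inv]
    rw [intervalIntegral.integral_of_le ht.le, hcoef, mul_assoc, hν,
      integral_const_mul]
  rw [hLHS, integral_integral_swap hFint]
  have hinner : (∫ s, (∫ z, F z s ∂μ) ∂ν)
      = ∫ s in Ioo (0:ℝ) t, Real.Gamma β * ((t - s) ^ (-β) * g s) := by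
    rw [hν, ← Measure.restrict_congr_set Ioo_ae_eq_Ioc]
    refine setIntegral_congr_fun measurableSet_Ioo fun s hs => ?_
    have ha : 0 < t - s := by linarith [hs.2]
    rw [hμ]
    calc (∫ z in Ioi (0:ℝ), F z s)
        = ∫ z in Ioi (0:ℝ), (z ^ (-(β + 1)) * Real.exp (-(t - s) / z)) * g s := by
          simp only [hFdef, mul_assoc]
      _ = (Real.Gamma β * (t - s) ^ (-β)) * g s := by
          rw [integral_mul_const, (key_int hβ0 ha).2]
      _ = Real.Gamma β * ((t - s) ^ (-β) * g s) := by ring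
  have hRHSint : (∫ s in (0:ℝ)..t, g s * (t - s) ^ (-β))
      = ∫ s in Ioo (0:ℝ) t, (t - s) ^ (-β) * g s := by
    rw [intervalIntegral.integral_of_le ht.le,
      ← Measure.restrict_congr_set Ioo_ae_eq_Ioc]
    refine setIntegral_congr_fun measurableSet_Ioo fun s hs => ?_
    ring
  rw [hinner, integral_const_mul, hRHSint, hC]
  field_simp

end Aux

/-- For `0 < β < 1`, `𝔼 > 0`, `t > 0` and `g` continuous on `[0,t]`,
`∫₀^∞ Ẽ_β(z) (∫₀^t exp(-(t-s)/z) g(s) ds) dz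
  = (𝔼/Γ(1-β)) ∫₀^t g(s) (t-s)^{-β} ds`,
where `Ẽ_β(z) = 𝔼/(Γ(1-β) Γ(β) z^{β+1})`.  In particular, when `g = ε'` is the
derivative of a strain history `ε`, the left-hand side equals `𝔼` times the
left-sided Caputo derivative of `ε` of order `β` at `t`. -/
theorem stmt1 (β E t : ℝ) (hβ : β ∈ Set.Ioo (0 : ℝ) 1) (hE : 0 < E) (ht : 0 < t)
    (g : ℝ → ℝ) (hg : ContinuousOn g (Set.Icc 0 t)) :
    ((∫ z in Set.Ioi (0 : ℝ),
        (E / (Real.Gamma (1 - β) * Real.Gamma β * z ^ (β + 1))) *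
          ∫ s in (0 : ℝ)..t, Real.exp (-(t - s) / z) * g s)
      = (E / Real.Gamma (1 - β)) * ∫ s in (0 : ℝ)..t, g s * (t - s) ^ (-β)) ∧
    (∀ ε : ℝ → ℝ, (∀ s ∈ Set.Icc (0 : ℝ) t, HasDerivWithinAt ε (g s) (Set.Icc 0 t) s) →
      (∫ z in Set.Ioi (0 : ℝ),
          (E / (Real.Gamma (1 - β) * Real.Gamma β * z ^ (β + 1))) *
            ∫ s in (0 : ℝ)..t, Real.exp (-(t - s) / z) * g s)
        = E * ((1 / Real.Gamma (1 - β)) *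
            ∫ s in (0 : ℝ)..t, g s * (t - s) ^ (-β))) := by
  have h1 := stmt_main β E t hβ hE ht g hg
  refine ⟨h1, fun ε _ => ?_⟩
  rw [h1]; ring
end

section
/- Let 0 < β < 1, 𝔼 > 0, T > 0, and let ε : [0, T] → ℝ be continuously differentiable. Define ψ(t) = (1/2) ∫₀^∞ Ẽ_β(z) · (∫₀^t exp(−(t − s)/z) ε′(s) ds)² dz, where Ẽ_β(z) = 𝔼 / (Γ(1 − β) Γ(β) z^{β+1}). Then for every t ∈ (0, T), ψ is differentiable at t and ψ′(t) = [∫₀^∞ Ẽ_β(z) · (∫₀^t exp(−(t − s)/z) ε′(s) ds) dz] · ε′(t) − ∫₀^∞ (Ẽ_β(z)/z) · (∫₀^t exp(−(t − s)/z) ε′(s) ds)² dz. -/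
open MeasureTheory Set intervalIntegral

private lemma stmt4_aux {T q : ℝ} (hT : 0 < T) (n : ℕ) (h1 : -1 < q + n) (h2 : q < -1) :
    IntegrableOn (fun z => z ^ q * min z T ^ n) (Ioi (0:ℝ)) := by
  have h01 : IntegrableOn (fun z => z ^ q * min z T ^ n) (Ioc (0:ℝ) T) := by
    have h := intervalIntegral.intervalIntegrable_rpow' (a := 0) (b := T) (r := q + n) h1
    rw [intervalIntegrable_iff_integrableOn_Ioc_of_le hT.le] at h
    refine h.congr_fun (fun z hz => ?_) measurableSet_Ioc
    rw [min_eq_left hz.2, ← Real.rpow_natCast z n, ← Real.rpow_add hz.1]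
  have h02 : IntegrableOn (fun z : ℝ => z ^ q * T ^ n) (Ioi T) :=
    (integrableOn_Ioi_rpow_of_lt h2 hT).mul_const (T ^ n)
  have h02' : IntegrableOn (fun z => z ^ q * min z T ^ n) (Ioi T) := by
    refine h02.congr_fun (fun z hz => ?_) measurableSet_Ioi
    rw [min_eq_right (le_of_lt hz)]
  have := h01.union h02'
  rwa [Ioc_union_Ioi_eq_Ioi hT.le] at this

set_option maxHeartbeats 1000000 in
/-- Differentiability in time of the Scott-Blair Helmholtz free-energy density
`ψ(t) = (1/2) ∫₀^∞ Ẽ_β(z) (∫₀^t exp(-(t-s)/z) ε'(s) ds)² dz`, with derivative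
`ψ'(t) = [∫₀^∞ Ẽ_β(z) (∫₀^t exp(-(t-s)/z) ε'(s) ds) dz] ε'(t)
  - ∫₀^∞ (Ẽ_β(z)/z) (∫₀^t exp(-(t-s)/z) ε'(s) ds)² dz`. -/
theorem stmt4 (β E T : ℝ) (hβ : β ∈ Set.Ioo (0 : ℝ) 1) (hE : 0 < E) (hT : 0 < T)
    (ε ε' : ℝ → ℝ)
    (hε : ∀ s ∈ Set.Icc (0 : ℝ) T, HasDerivWithinAt ε (ε' s) (Set.Icc 0 T) s)
    (hε' : ContinuousOn ε' (Set.Icc 0 T)) :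
    ∀ t ∈ Set.Ioo (0 : ℝ) T,
      HasDerivAt
        (fun τ => (1 / 2) * ∫ z in Set.Ioi (0 : ℝ),
          (E / (Real.Gamma (1 - β) * Real.Gamma β * z ^ (β + 1))) *
            (∫ s in (0 : ℝ)..τ, Real.exp (-(τ - s) / z) * ε' s) ^ 2)
        ((∫ z in Set.Ioi (0 : ℝ),
            (E / (Real.Gamma (1 - β) * Real.Gamma β * z ^ (β + 1))) *
              ∫ s in (0 : ℝ)..t, Real.exp (-(t - s) / z) * ε' s) * ε' t
          - ∫ z in Set.Ioi (0 : ℝ),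
              (E / (Real.Gamma (1 - β) * Real.Gamma β * z ^ (β + 1)) / z) *
                (∫ s in (0 : ℝ)..t, Real.exp (-(t - s) / z) * ε' s) ^ 2) t := by
  obtain ⟨hβ0, hβ1⟩ := hβ
  intro t ht
  obtain ⟨ht0, htT⟩ := ht
  have hΓ : 0 < Real.Gamma (1 - β) * Real.Gamma β :=
    mul_pos (Real.Gamma_pos_of_pos (by linarith)) (Real.Gamma_pos_of_pos hβ0)
  set K := Real.Gamma (1 - β) * Real.Gamma β with hKdef
  set c := E / K with hcdef
  have hc0 : 0 < c := div_pos hE hΓ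
  have htIcc : t ∈ Icc (0:ℝ) T := ⟨ht0.le, htT.le⟩
  -- Tietze extension of ε'
  obtain ⟨φ, hφ⟩ : ∃ φ : C(ℝ, ℝ), ∀ s ∈ Icc (0:ℝ) T, φ s = ε' s := by
    obtain ⟨g, hg⟩ := ContinuousMap.exists_restrict_eq (isClosed_Icc (a := (0:ℝ)) (b := T))
      ⟨_, hε'.restrict⟩
    exact ⟨g, fun s hs => DFunLike.congr_fun hg ⟨s, hs⟩⟩
  -- uniform bound on φ over [0,T]
  obtain ⟨M0, hM0⟩ := (isCompact_Icc (a := (0:ℝ)) (b := T)).exists_bound_of_continuousOn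
    φ.continuous.continuousOn
  set M := max M0 0 with hMdef
  have hM0' : (0:ℝ) ≤ M := le_max_right _ _
  have hMb : ∀ s ∈ Icc (0:ℝ) T, |φ s| ≤ M := fun s hs =>
    le_trans (by simpa [Real.norm_eq_abs] using hM0 s hs) (le_max_left _ _)
  -- the auxiliary kernel
  set G : ℝ → ℝ → ℝ := fun τ z => Real.exp (-τ/z) * ∫ s in (0:ℝ)..τ, Real.exp (s/z) * φ s
    with hGdef
  -- fact1: rewriting the statement's inner integral
  have fact1 : ∀ z : ℝ, z ≠ 0 → ∀ τ ∈ Icc (0:ℝ) T,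
      (∫ s in (0 : ℝ)..τ, Real.exp (-(τ - s) / z) * ε' s) = G τ z := by
    intro z hz τ hτ
    have e1 : (∫ s in (0 : ℝ)..τ, Real.exp (-(τ - s) / z) * ε' s)
        = ∫ s in (0 : ℝ)..τ, Real.exp (-(τ - s) / z) * φ s := by
      refine intervalIntegral.integral_congr (fun s hs => ?_)
      rw [Set.uIcc_of_le hτ.1] at hs
      rw [hφ s ⟨hs.1, le_trans hs.2 hτ.2⟩]
    rw [e1]
    simp only [hGdef]
    rw [← intervalIntegral.integral_const_mul]
    refine intervalIntegral.integral_congr (fun s _ => ?_)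
    have h : -(τ - s)/z = -τ/z + s/z := by ring
    rw [h, Real.exp_add, mul_assoc]
  -- fact2: derivative of G in its first variable
  have fact2 : ∀ z : ℝ, 0 < z → ∀ τ : ℝ,
      HasDerivAt (fun u => G u z) (φ τ - G τ z / z) τ := by
    intro z hz τ
    have hcont : Continuous fun s => Real.exp (s/z) * φ s := by fun_prop
    have hH : HasDerivAt (fun u => ∫ s in (0:ℝ)..u, Real.exp (s/z) * φ s)
        (Real.exp (τ/z) * φ τ) τ :=
      intervalIntegral.integral_hasDerivAt_right (hcont.intervalIntegrable 0 τ)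
        hcont.aestronglyMeasurable.stronglyMeasurableAtFilter hcont.continuousAt
    have hexp : HasDerivAt (fun u : ℝ => Real.exp (-u/z)) (Real.exp (-τ/z) * (-1/z)) τ := by
      have h1 : HasDerivAt (fun u : ℝ => -u/z) (-1/z) τ := by
        simpa using ((hasDerivAt_id τ).neg.div_const z)
      exact h1.exp
    have hmul := hexp.mul hH
    have hprod : Real.exp (-τ/z) * Real.exp (τ/z) = 1 := by
      rw [← Real.exp_add]; rw [show -τ/z + τ/z = 0 by ring, Real.exp_zero]
    simp only [hGdef]
    refine hmul.congr_deriv ?_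
    have : Real.exp (-τ/z) * (Real.exp (τ/z) * φ τ) = φ τ := by
      rw [← mul_assoc, hprod, one_mul]
    rw [mul_comm (Real.exp (-τ/z) * (-1/z))]
    linear_combination this
  -- fact3: bounds on G
  have fact3T : ∀ z : ℝ, 0 < z → ∀ τ ∈ Icc (0:ℝ) T, |G τ z| ≤ M * T := by
    intro z hz τ hτ
    have hb : ∀ x ∈ Set.uIoc (0:ℝ) τ, ‖Real.exp (x/z) * φ x‖ ≤ Real.exp (τ/z) * M := by
      intro x hx
      rw [Set.uIoc_of_le hτ.1] at hx
      rw [Real.norm_eq_abs, abs_mul, Real.abs_exp]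
      have hle : x/z ≤ τ/z := by gcongr; exact hx.2
      exact mul_le_mul (Real.exp_le_exp.2 hle) (hMb x ⟨hx.1.le, hx.2.trans hτ.2⟩)
        (abs_nonneg _) (Real.exp_pos _).le
    have h1 := intervalIntegral.norm_integral_le_of_norm_le_const hb
    rw [Real.norm_eq_abs, sub_zero] at h1
    have hprod : Real.exp (-τ/z) * Real.exp (τ/z) = 1 := by
      rw [← Real.exp_add]; rw [show -τ/z + τ/z = 0 by ring, Real.exp_zero]
    have hGabs : |G τ z| = Real.exp (-τ/z) * |∫ s in (0:ℝ)..τ, Real.exp (s/z) * φ s| := by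
      simp only [hGdef]
      rw [abs_mul, Real.abs_exp]
    rw [hGabs]
    calc Real.exp (-τ/z) * |∫ s in (0:ℝ)..τ, Real.exp (s/z) * φ s|
        ≤ Real.exp (-τ/z) * (Real.exp (τ/z) * M * |τ|) :=
          mul_le_mul_of_nonneg_left h1 (Real.exp_pos _).le
      _ = M * |τ| := by linear_combination (M * |τ|) * hprod
      _ ≤ M * T := by
          rw [abs_of_nonneg hτ.1]
          exact mul_le_mul_of_nonneg_left hτ.2 hM0'
  have fact3z : ∀ z : ℝ, 0 < z → ∀ τ ∈ Icc (0:ℝ) T, |G τ z| ≤ M * z := by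
    intro z hz τ hτ
    have hcont : Continuous fun s => Real.exp (s/z) * φ s := by fun_prop
    have h1 : |∫ s in (0:ℝ)..τ, Real.exp (s/z) * φ s|
        ≤ ∫ s in (0:ℝ)..τ, |Real.exp (s/z) * φ s| :=
      intervalIntegral.abs_integral_le_integral_abs hτ.1
    have h2 : (∫ s in (0:ℝ)..τ, |Real.exp (s/z) * φ s|)
        ≤ ∫ s in (0:ℝ)..τ, Real.exp (s/z) * M := by
      refine intervalIntegral.integral_mono_on hτ.1 (hcont.abs.intervalIntegrable 0 τ)
        ((by fun_prop : Continuous fun s => Real.exp (s/z) * M).intervalIntegrable 0 τ)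
        (fun x hx => ?_)
      rw [abs_mul, Real.abs_exp]
      exact mul_le_mul_of_nonneg_left (hMb x ⟨hx.1, hx.2.trans hτ.2⟩) (Real.exp_pos _).le
    have h3 : (∫ s in (0:ℝ)..τ, Real.exp (s/z) * M) = M * (z * (Real.exp (τ/z) - 1)) := by
      rw [intervalIntegral.integral_mul_const]
      have h4 : (∫ s in (0:ℝ)..τ, Real.exp (s/z)) = z * (Real.exp (τ/z) - 1) := by
        rw [intervalIntegral.integral_comp_div (a := 0) (b := τ) (fun x => Real.exp x)
          (ne_of_gt hz), integral_exp]
        simp [smul_eq_mul]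
      rw [h4]; ring
    have hprod : Real.exp (-τ/z) * Real.exp (τ/z) = 1 := by
      rw [← Real.exp_add]; rw [show -τ/z + τ/z = 0 by ring, Real.exp_zero]
    have hGabs : |G τ z| = Real.exp (-τ/z) * |∫ s in (0:ℝ)..τ, Real.exp (s/z) * φ s| := by
      simp only [hGdef]
      rw [abs_mul, Real.abs_exp]
    have hle1 : Real.exp (-τ/z) ≤ 1 := by
      rw [Real.exp_le_one_iff]
      exact div_nonpos_iff.2 (Or.inr ⟨neg_nonpos.2 hτ.1, hz.le⟩)
    have hGb : |G τ z| ≤ M * z * (1 - Real.exp (-τ/z)) := by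
      rw [hGabs]
      calc Real.exp (-τ/z) * |∫ s in (0:ℝ)..τ, Real.exp (s/z) * φ s|
          ≤ Real.exp (-τ/z) * (M * (z * (Real.exp (τ/z) - 1))) :=
            mul_le_mul_of_nonneg_left (h1.trans (h2.trans_eq h3)) (Real.exp_pos _).le
        _ = M * z * (1 - Real.exp (-τ/z)) := by linear_combination (M * z) * hprod
    nlinarith [mul_nonneg (mul_nonneg hM0' hz.le) (Real.exp_pos (-τ/z)).le]
  have fact3 : ∀ z : ℝ, 0 < z → ∀ τ ∈ Icc (0:ℝ) T, |G τ z| ≤ M * min z T := by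
    intro z hz τ hτ
    rcases le_total z T with h | h
    · rw [min_eq_left h]; exact fact3z z hz τ hτ
    · rw [min_eq_right h]; exact fact3T z hz τ hτ
  -- fact4: continuity of G in z
  have fact4 : ∀ τ : ℝ, ContinuousOn (fun z => G τ z) (Ioi (0:ℝ)) := by
    intro τ
    simp only [hGdef]
    have hinv : ContinuousOn (fun z : ℝ => z⁻¹) (Ioi 0) :=
      continuousOn_inv₀.mono (fun z hz => ne_of_gt hz)
    have h1 : Continuous fun u : ℝ => ∫ s in (0:ℝ)..τ, Real.exp (s*u) * φ s := by
      apply intervalIntegral.continuous_parametric_intervalIntegral_of_continuous'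
      fun_prop
    have h2 : ContinuousOn (fun z : ℝ => ∫ s in (0:ℝ)..τ, Real.exp (s/z) * φ s) (Ioi 0) := by
      have h3 := h1.comp_continuousOn hinv
      refine h3.congr (fun z _ => ?_)
      simp only [Function.comp, div_eq_mul_inv]
    have h3 : ContinuousOn (fun z : ℝ => Real.exp (-τ/z)) (Ioi 0) :=
      Real.continuous_exp.comp_continuousOn
        (continuousOn_const.div continuousOn_id (fun z hz => ne_of_gt hz))
    exact h3.mul h2
  -- the spectrum factor
  have hEtpos : ∀ z ∈ Ioi (0:ℝ), 0 < E / (K * z ^ (β+1)) := fun z hz =>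
    div_pos hE (mul_pos hΓ (Real.rpow_pos_of_pos hz _))
  have hEteq : ∀ z ∈ Ioi (0:ℝ), E / (K * z ^ (β+1)) = c * z ^ (-(β+1)) := by
    intro z hz
    rw [Real.rpow_neg (le_of_lt hz), hcdef]
    rw [div_mul_eq_div_div, div_eq_mul_inv (E / K)]
  have hEtcont : ContinuousOn (fun z : ℝ => E / (K * z ^ (β+1))) (Ioi (0:ℝ)) := by
    apply continuousOn_const.div
    · exact continuousOn_const.mul (continuousOn_id.rpow_const
        (fun z hz => Or.inl (ne_of_gt hz)))
    · exact fun z hz => ne_of_gt (mul_pos hΓ (Real.rpow_pos_of_pos hz _))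
  -- the ball around t
  set δ := min t (T - t) with hδdef
  have hδ0 : 0 < δ := lt_min ht0 (by linarith)
  have hballIcc : Metric.ball t δ ⊆ Icc (0:ℝ) T := by
    intro x hx
    rw [Metric.mem_ball, Real.dist_eq] at hx
    have h1 := abs_lt.1 hx
    have h2 : δ ≤ t := min_le_left _ _
    have h3 : δ ≤ T - t := min_le_right _ _
    constructor <;> [linarith [h1.1]; linarith [h1.2]]
  -- measurability of F τ for τ in the ball
  have hmeasF : ∀ τ ∈ Metric.ball t δ,
      AEStronglyMeasurable
        (fun z => (E / (K * z ^ (β+1))) *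
          (∫ s in (0 : ℝ)..τ, Real.exp (-(τ - s) / z) * ε' s) ^ 2)
        (volume.restrict (Ioi (0:ℝ))) := by
    intro τ hτ
    have hcont : ContinuousOn (fun z => (E / (K * z ^ (β+1))) * (G τ z)^2) (Ioi (0:ℝ)) :=
      hEtcont.mul ((fact4 τ).pow 2)
    refine (hcont.aestronglyMeasurable measurableSet_Ioi).congr ?_
    filter_upwards [ae_restrict_mem measurableSet_Ioi] with z hz
    rw [fact1 z (ne_of_gt hz) τ (hballIcc hτ)]
  -- integrability of F t
  have hFint : Integrable
      (fun z => (E / (K * z ^ (β+1))) *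
        (∫ s in (0 : ℝ)..t, Real.exp (-(t - s) / z) * ε' s) ^ 2)
      (volume.restrict (Ioi (0:ℝ))) := by
    have hbd : IntegrableOn (fun z => (M^2 * c) * (z ^ (-(β+1)) * min z T ^ (2:ℕ)))
        (Ioi (0:ℝ)) :=
      (stmt4_aux hT 2 (by push_cast; linarith) (by linarith)).const_mul _
    refine hbd.mono' (hmeasF t (Metric.mem_ball_self hδ0)) ?_
    filter_upwards [ae_restrict_mem measurableSet_Ioi] with z hz
    rw [fact1 z (ne_of_gt hz) t htIcc, Real.norm_eq_abs, abs_mul,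
      abs_of_pos (hEtpos z hz), hEteq z hz]
    have h := fact3 z hz t htIcc
    have h2 : |G t z| ^ 2 ≤ (M * min z T)^2 := pow_le_pow_left₀ (abs_nonneg _) h 2
    have hzp : (0:ℝ) ≤ z ^ (-(β+1)) := (Real.rpow_pos_of_pos hz _).le
    calc c * z ^ (-(β+1)) * |G t z ^ 2|
        = c * z ^ (-(β+1)) * |G t z| ^ 2 := by rw [abs_pow]
      _ ≤ c * z ^ (-(β+1)) * (M * min z T)^2 :=
          mul_le_mul_of_nonneg_left h2 (mul_nonneg hc0.le hzp)
      _ = M^2 * c * (z ^ (-(β+1)) * min z T ^ (2:ℕ)) := by ring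
  -- measurability of F' t
  have hF'meas : AEStronglyMeasurable
      (fun z => (E / (K * z ^ (β+1))) * (2 * G t z * (φ t - G t z / z)))
      (volume.restrict (Ioi (0:ℝ))) := by
    have hcont : ContinuousOn
        (fun z => (E / (K * z ^ (β+1))) * (2 * G t z * (φ t - G t z / z))) (Ioi (0:ℝ)) :=
      hEtcont.mul ((continuousOn_const.mul (fact4 t)).mul
        (continuousOn_const.sub ((fact4 t).div continuousOn_id (fun z hz => ne_of_gt hz))))
    exact hcont.aestronglyMeasurable measurableSet_Ioi
  -- uniform bound on F'
  have hbnd : ∀ᵐ z ∂(volume.restrict (Ioi (0:ℝ))), ∀ τ ∈ Metric.ball t δ,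
      ‖(E / (K * z ^ (β+1))) * (2 * G τ z * (φ τ - G τ z / z))‖
        ≤ (4 * M^2 * c) * (z ^ (-(β+1)) * min z T ^ (1:ℕ)) := by
    filter_upwards [ae_restrict_mem measurableSet_Ioi] with z hz τ hτ
    have hτIcc := hballIcc hτ
    have hG := fact3 z hz τ hτIcc
    have hGz : |G τ z / z| ≤ M := by
      rw [abs_div, abs_of_pos (show (0:ℝ) < z from hz), div_le_iff₀ (show (0:ℝ) < z from hz)]
      calc |G τ z| ≤ M * min z T := hG
        _ ≤ M * z := mul_le_mul_of_nonneg_left (min_le_left _ _) hM0'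
    have hφτ : |φ τ| ≤ M := hMb τ hτIcc
    rw [Real.norm_eq_abs, abs_mul, abs_of_pos (hEtpos z hz), hEteq z hz]
    have habs : |φ τ - G τ z / z| ≤ 2 * M := by
      calc |φ τ - G τ z / z| ≤ |φ τ| + |G τ z / z| := abs_sub _ _
        _ ≤ M + M := add_le_add hφτ hGz
        _ = 2 * M := by ring
    have h1 : |2 * G τ z * (φ τ - G τ z / z)| ≤ 2 * (M * min z T) * (2 * M) := by
      rw [abs_mul, abs_mul, abs_two]
      exact mul_le_mul (mul_le_mul_of_nonneg_left hG (by norm_num)) habs (abs_nonneg _)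
        (mul_nonneg (by norm_num) (mul_nonneg hM0' (le_min hz.le hT.le)))
    have hzp : (0:ℝ) ≤ z ^ (-(β+1)) := (Real.rpow_pos_of_pos hz _).le
    calc c * z ^ (-(β+1)) * |2 * G τ z * (φ τ - G τ z / z)|
        ≤ c * z ^ (-(β+1)) * (2 * (M * min z T) * (2 * M)) :=
          mul_le_mul_of_nonneg_left h1 (mul_nonneg hc0.le hzp)
      _ = (4 * M^2 * c) * (z ^ (-(β+1)) * min z T ^ (1:ℕ)) := by rw [pow_one]; ring
  -- integrability of the bound
  have hboundint : Integrable (fun z => (4 * M^2 * c) * (z ^ (-(β+1)) * min z T ^ (1:ℕ)))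
      (volume.restrict (Ioi (0:ℝ))) :=
    (stmt4_aux hT 1 (by push_cast; linarith) (by linarith)).const_mul _
  -- differentiability in τ
  have hdiff : ∀ᵐ z ∂(volume.restrict (Ioi (0:ℝ))), ∀ τ ∈ Metric.ball t δ,
      HasDerivAt (fun u => (E / (K * z ^ (β+1))) *
          (∫ s in (0 : ℝ)..u, Real.exp (-(u - s) / z) * ε' s) ^ 2)
        ((E / (K * z ^ (β+1))) * (2 * G τ z * (φ τ - G τ z / z))) τ := by
    filter_upwards [ae_restrict_mem measurableSet_Ioi] with z hz τ hτ
    have hd : HasDerivAt (fun u => (E / (K * z ^ (β+1))) * (G u z)^2)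
        ((E / (K * z ^ (β+1))) * (2 * G τ z * (φ τ - G τ z / z))) τ := by
      have h := ((fact2 z hz τ).pow 2).const_mul (E / (K * z ^ (β+1)))
      refine h.congr_deriv ?_
      push_cast
      ring
    refine hd.congr_of_eventuallyEq ?_
    filter_upwards [Metric.isOpen_ball.mem_nhds hτ] with x hx
    rw [fact1 z (ne_of_gt hz) x (hballIcc hx)]
  -- differentiation under the integral sign
  clear_value K c M G δ
  obtain ⟨-, hmain⟩ := _root_.hasDerivAt_integral_of_dominated_loc_of_deriv_le
    (μ := volume.restrict (Ioi (0:ℝ)))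
    (F := fun τ z => (E / (K * z ^ (β+1))) *
      (∫ s in (0 : ℝ)..τ, Real.exp (-(τ - s) / z) * ε' s) ^ 2)
    (F' := fun τ z => (E / (K * z ^ (β+1))) * (2 * G τ z * (φ τ - G τ z / z)))
    (bound := fun z => (4 * M^2 * c) * (z ^ (-(β+1)) * min z T ^ (1:ℕ)))
    (Metric.ball_mem_nhds t hδ0) (Filter.eventually_of_mem (Metric.ball_mem_nhds t hδ0) hmeasF)
    hFint hF'meas hbnd hboundint hdiff
  have hfinal := hmain.const_mul (1/2 : ℝ)
  -- rewrite the target's integrals using G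
  have e1 : (∫ z in Ioi (0:ℝ), (E / (K * z ^ (β+1))) *
      ∫ s in (0 : ℝ)..t, Real.exp (-(t - s) / z) * ε' s)
      = ∫ z in Ioi (0:ℝ), (E / (K * z ^ (β+1))) * G t z := by
    refine setIntegral_congr_fun measurableSet_Ioi (fun z hz => ?_)
    rw [fact1 z (ne_of_gt hz) t htIcc]
  have e2 : (∫ z in Ioi (0:ℝ), (E / (K * z ^ (β+1)) / z) *
      (∫ s in (0 : ℝ)..t, Real.exp (-(t - s) / z) * ε' s) ^ 2)
      = ∫ z in Ioi (0:ℝ), (E / (K * z ^ (β+1)) / z) * (G t z)^2 := by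
    refine setIntegral_congr_fun measurableSet_Ioi (fun z hz => ?_)
    rw [fact1 z (ne_of_gt hz) t htIcc]
  -- integrability of the two pieces
  have int1 : IntegrableOn (fun z => (E / (K * z ^ (β+1))) * G t z) (Ioi (0:ℝ)) := by
    have hbd : IntegrableOn (fun z => (M * c) * (z ^ (-(β+1)) * min z T ^ (1:ℕ)))
        (Ioi (0:ℝ)) :=
      (stmt4_aux hT 1 (by push_cast; linarith) (by linarith)).const_mul _
    refine hbd.mono' ((hEtcont.mul (fact4 t)).aestronglyMeasurable measurableSet_Ioi) ?_
    filter_upwards [ae_restrict_mem measurableSet_Ioi] with z hz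
    rw [Real.norm_eq_abs, abs_mul, abs_of_pos (hEtpos z hz), hEteq z hz]
    have h := fact3 z hz t htIcc
    have hzp : (0:ℝ) ≤ z ^ (-(β+1)) := (Real.rpow_pos_of_pos hz _).le
    calc c * z ^ (-(β+1)) * |G t z| ≤ c * z ^ (-(β+1)) * (M * min z T) :=
          mul_le_mul_of_nonneg_left h (mul_nonneg hc0.le hzp)
      _ = (M * c) * (z ^ (-(β+1)) * min z T ^ (1:ℕ)) := by rw [pow_one]; ring
  have int2 : IntegrableOn (fun z => (E / (K * z ^ (β+1)) / z) * (G t z)^2) (Ioi (0:ℝ)) := by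
    have hbd : IntegrableOn (fun z => (M^2 * c) * (z ^ (-(β+2)) * min z T ^ (2:ℕ)))
        (Ioi (0:ℝ)) :=
      (stmt4_aux hT 2 (by push_cast; linarith) (by linarith)).const_mul _
    have hcont : ContinuousOn (fun z => (E / (K * z ^ (β+1)) / z) * (G t z)^2) (Ioi (0:ℝ)) :=
      (hEtcont.div continuousOn_id (fun z hz => ne_of_gt hz)).mul ((fact4 t).pow 2)
    refine hbd.mono' (hcont.aestronglyMeasurable measurableSet_Ioi) ?_
    filter_upwards [ae_restrict_mem measurableSet_Ioi] with z hz
    have hdiv : E / (K * z ^ (β+1)) / z = c * z ^ (-(β+2)) := by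
      rw [hEteq z hz, div_eq_mul_inv, mul_assoc, ← Real.rpow_neg_one z,
        ← Real.rpow_add hz]
      congr 1
      ring
    rw [Real.norm_eq_abs, abs_mul, hdiv, abs_of_pos (mul_pos hc0 (Real.rpow_pos_of_pos hz _))]
    have h := fact3 z hz t htIcc
    have h2 : |G t z ^ 2| ≤ (M * min z T)^2 := by
      rw [abs_pow]; exact pow_le_pow_left₀ (abs_nonneg _) h 2
    have hzp : (0:ℝ) ≤ z ^ (-(β+2)) := (Real.rpow_pos_of_pos hz _).le
    calc c * z ^ (-(β+2)) * |G t z ^ 2| ≤ c * z ^ (-(β+2)) * (M * min z T)^2 :=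
          mul_le_mul_of_nonneg_left h2 (mul_nonneg hc0.le hzp)
      _ = (M^2 * c) * (z ^ (-(β+2)) * min z T ^ (2:ℕ)) := by ring
  -- split the derivative integral
  have split : (∫ z in Ioi (0:ℝ), (E / (K * z ^ (β+1))) * (2 * G t z * (φ t - G t z / z)))
      = 2 * ((∫ z in Ioi (0:ℝ), (E / (K * z ^ (β+1))) * G t z) * ε' t
          - ∫ z in Ioi (0:ℝ), (E / (K * z ^ (β+1)) / z) * (G t z)^2) := by
    rw [← hφ t htIcc]
    have e3 : (∫ z in Ioi (0:ℝ), (E / (K * z ^ (β+1))) * (2 * G t z * (φ t - G t z / z)))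
        = ∫ z in Ioi (0:ℝ), (2 * ((E / (K * z ^ (β+1))) * G t z * φ t)
            - 2 * ((E / (K * z ^ (β+1)) / z) * (G t z)^2)) := by
      refine setIntegral_congr_fun measurableSet_Ioi (fun z _ => ?_)
      ring
    rw [e3, integral_sub ((int1.mul_const (φ t)).const_mul 2) (int2.const_mul 2),
      MeasureTheory.integral_const_mul, MeasureTheory.integral_const_mul,
      MeasureTheory.integral_mul_const]
    ring
  have hval : (∫ z in Ioi (0:ℝ), (E / (K * z ^ (β+1))) * G t z) * ε' t
      - (∫ z in Ioi (0:ℝ), (E / (K * z ^ (β+1)) / z) * (G t z)^2)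
      = (1/2 : ℝ) * ∫ z in Ioi (0:ℝ),
          (E / (K * z ^ (β+1))) * (2 * G t z * (φ t - G t z / z)) := by
    rw [split]; ring
  rw [e1, e2, hval]
  exact hfinal
end

section
/- Let 0 < β < 1, T > 0, and let f : (−∞, T] → ℝ be continuous, constant on (−∞, 0] (i.e., f(t) = f(0) for all t ≤ 0), and such that f is differentiable on (0, T] with f′ ∈ L¹(0, T) ∩ C((0, T]). Then for every t ∈ (0, T], the limit lim_{ε → 0⁺} ∫_ε^∞ (f(t) − f(t − s)) · s · ρ_∞(s) ds exists and equals the Caputo fractional derivative (1/Γ(1 − β)) ∫₀^t f′(s) (t − s)^{−β} ds, where ρ_∞(s) = (β / Γ(1 − β)) s^{−β−2}. -/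
/-!
Since `f` is constant on `(-∞, 0]`, the increment `f t - f (t - s)` equals
`∫_{(0,t)} 1_{u ≥ t - s} f' u du` for every `s ≥ 0`. The weight is `s ρ_∞(s) = β s^{-β-1} / Γ(1-β)`
and `∫_{max(ε,c)}^∞ β s^{-β-1} ds = max(ε,c)^{-β}`, so for fixed `ε > 0` Fubini turns the truncated
nonlocal gradient into `Γ(1-β)⁻¹ ∫_0^t f'(u) max(ε, t-u)^{-β} du`. As `ε → 0⁺` this integrand is
dominated by `|f'(u)| (t-u)^{-β}`, which is integrable because `f'` is integrable on `(0,t)`, bounded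
near `t`, and `β < 1`; dominated convergence gives the Caputo derivative.
-/

open MeasureTheory Set Filter Topology

lemma integral_Ioi_mul_rpow_neg_sub_one {β a : ℝ} (hβ : 0 < β) (ha : 0 < a) :
    ∫ s in Ioi a, β * s ^ (-β - 1) = a ^ (-β) := by
  rw [integral_const_mul, integral_Ioi_rpow_of_lt (by linarith) ha, sub_add_cancel]
  field_simp

lemma integral_Ioi_indicator_Ici_mul_rpow {β ε : ℝ} (hβ : 0 < β) (hε : 0 < ε) (c : ℝ) :
    ∫ s in Ioi ε, (Ici c).indicator (fun s => β * s ^ (-β - 1)) s = max ε c ^ (-β) := by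
  rw [setIntegral_indicator measurableSet_Ici,
    setIntegral_congr_set ((ae_eq_refl (Ioi ε)).inter Ioi_ae_eq_Ici.symm), Ioi_inter_Ioi]
  exact integral_Ioi_mul_rpow_neg_sub_one hβ (lt_max_of_lt_left hε)

lemma integral_Ioo_indicator_Ici_eq_sub {f f' : ℝ → ℝ} {t c : ℝ} (ht : 0 ≤ t) (hct : c ≤ t)
    (hfc : ContinuousOn f (Icc 0 t)) (hconst : ∀ x ≤ 0, f x = f 0)
    (hderiv : ∀ x ∈ Ioo 0 t, HasDerivAt f (f' x) x) (hint : IntegrableOn f' (Ioo 0 t)) :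
    ∫ u in Ioo 0 t, (Ici c).indicator f' u = f t - f c := by
  have ftc : ∀ a ∈ Icc 0 t, ∫ u in Ioo a t, f' u = f t - f a := fun a ha => by
    rw [← integral_Ioc_eq_integral_Ioo, ← intervalIntegral.integral_of_le ha.2]
    refine intervalIntegral.integral_eq_sub_of_hasDerivAt_of_le ha.2
      (hfc.mono (Icc_subset_Icc_left ha.1))
      (fun x hx => hderiv x (Ioo_subset_Ioo_left ha.1 hx)) ?_
    rw [intervalIntegrable_iff_integrableOn_Ioo_of_le ha.2]
    exact hint.mono_set (Ioo_subset_Ioo_left ha.1)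
  rw [setIntegral_indicator measurableSet_Ici]
  rcases le_or_gt c 0 with hc | hc
  · have hIoo : Ioo 0 t ∩ Ici c = Ioo 0 t := inter_eq_left.2 fun u hu => hc.trans hu.1.le
    rw [hIoo, hconst c hc]
    exact ftc 0 ⟨le_rfl, ht⟩
  · have hIco : Ioo 0 t ∩ Ici c = Ico c t := by
      ext u
      simp only [mem_inter_iff, mem_Ioo, mem_Ici, mem_Ico]
      constructor
      · rintro ⟨⟨-, hut⟩, hcu⟩; exact ⟨hcu, hut⟩
      · rintro ⟨hcu, hut⟩; exact ⟨⟨hc.trans_le hcu, hut⟩, hcu⟩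
    rw [hIco, integral_Ico_eq_integral_Ioo]
    exact ftc c ⟨hc.le, hct⟩

lemma integral_Ioi_integral_indicator_mul_rpow {μ : Measure ℝ} [SFinite μ] {g : ℝ → ℝ}
    {β ε : ℝ} (hβ : 0 < β) (hε : 0 < ε) (t : ℝ) (hg : Integrable g μ) :
    ∫ s in Ioi ε, (∫ u, (Ici (t - s)).indicator g u ∂μ) * (β * s ^ (-β - 1))
      = ∫ u, g u * max ε (t - u) ^ (-β) ∂μ := by
  set k : ℝ → ℝ := fun s => β * s ^ (-β - 1)
  set S : Set (ℝ × ℝ) := {p | t - p.1 ≤ p.2}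
  have hS : MeasurableSet S := measurableSet_le (by fun_prop) (by fun_prop)
  have hk : IntegrableOn k (Ioi ε) :=
    (integrableOn_Ioi_rpow_of_lt (by linarith) hε).const_mul β
  have hint :
      Integrable (S.indicator fun p => k p.1 * g p.2) ((volume.restrict (Ioi ε)).prod μ) :=
    (hk.mul_prod hg).indicator hS
  calc ∫ s in Ioi ε, (∫ u, (Ici (t - s)).indicator g u ∂μ) * k s
      = ∫ s in Ioi ε, ∫ u, S.indicator (fun p => k p.1 * g p.2) (s, u) ∂μ := by
        congr 1 with s
        simp only [← integral_mul_const, S, indicator_apply, mem_Ici, mem_ofPred_eq]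
        congr 1 with u
        split_ifs <;> ring
    _ = ∫ u, (∫ s in Ioi ε, S.indicator (fun p => k p.1 * g p.2) (s, u)) ∂μ :=
        integral_integral_swap hint
    _ = ∫ u, g u * max ε (t - u) ^ (-β) ∂μ := by
        congr 1 with u
        rw [← integral_Ioi_indicator_Ici_mul_rpow hβ hε, ← integral_const_mul]
        simp only [S, k, indicator_apply, mem_Ici, mem_ofPred_eq]
        congr 1 with s
        simp only [sub_le_comm (a := t) (b := s)]
        split_ifs <;> ring

lemma integrableOn_mul_sub_rpow_neg {g : ℝ → ℝ} {a b β : ℝ} (hβ : β < 1)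
    (hg : IntegrableOn g (Ioo a b)) (hgc : ContinuousOn g (Ioc a b)) :
    IntegrableOn (fun u => g u * (b - u) ^ (-β)) (Ioo a b) := by
  rcases le_or_gt b a with hba | hab
  · simp [Ioo_eq_empty_of_le hba]
  obtain ⟨m, ham, hmb⟩ := exists_between hab
  have hsplit : Ioo a b = Ioc a m ∪ Ioo m b := (Ioc_union_Ioo_eq_Ioo ham.le hmb).symm
  rw [hsplit]
  refine IntegrableOn.union ?_ ?_
  · refine (hg.mono_set (Ioc_subset_Ioo_right hmb)).mul_continuousOn_of_subset ?_
      measurableSet_Ioc isCompact_Icc Ioc_subset_Icc_self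
    exact (continuousOn_const.sub continuousOn_id).rpow_const fun u hu =>
      Or.inl (sub_pos.2 (hu.2.trans_lt hmb)).ne'
  · refine IntegrableOn.continuousOn_mul_of_subset (K := Icc m b)
      (hgc.mono fun u hu => ⟨ham.trans_le hu.1, hu.2⟩) ?_ isCompact_Icc measurableSet_Ioo
      Ioo_subset_Icc_self
    have h := (intervalIntegral.intervalIntegrable_rpow' (r := -β) (by linarith)).comp_sub_left b
      (a := b - m) (b := 0)
    rwa [sub_sub_cancel, sub_zero, intervalIntegrable_iff_integrableOn_Ioo_of_le hmb.le] at h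

lemma tendsto_integral_mul_max_rpow {μ : Measure ℝ} {g : ℝ → ℝ} {b β : ℝ} (hβ : 0 ≤ β)
    (hb : ∀ᵐ u ∂μ, u < b) (hgm : AEStronglyMeasurable g μ)
    (hg : Integrable (fun u => g u * (b - u) ^ (-β)) μ) :
    Tendsto (fun ε => ∫ u, g u * max ε (b - u) ^ (-β) ∂μ) (𝓝[>] 0)
      (𝓝 (∫ u, g u * (b - u) ^ (-β) ∂μ)) := by
  refine tendsto_integral_filter_of_dominated_convergence _
    (Eventually.of_forall fun ε => hgm.mul (by fun_prop : Measurable _).aestronglyMeasurable)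
    ?_ hg.norm ?_
  · filter_upwards [self_mem_nhdsWithin] with ε (hε : 0 < ε)
    filter_upwards [hb] with u hu
    rw [norm_mul, norm_mul,
      Real.norm_of_nonneg (Real.rpow_nonneg (hε.le.trans (le_max_left _ _)) _),
      Real.norm_of_nonneg (Real.rpow_nonneg (sub_nonneg.2 hu.le) _)]
    exact mul_le_mul_of_nonneg_left
      (Real.rpow_le_rpow_of_nonpos (sub_pos.2 hu) (le_max_right _ _) (neg_nonpos.2 hβ))
      (norm_nonneg _)
  · filter_upwards [hb] with u hu
    refine tendsto_const_nhds.congr' ?_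
    filter_upwards [Ioo_mem_nhdsGT (sub_pos.2 hu)] with ε hε
    rw [max_eq_right hε.2.le]

theorem stmt5_general (β T : ℝ) (hβ : β ∈ Set.Ioo (0 : ℝ) 1)
    (f f' : ℝ → ℝ) (hfc : ContinuousOn f (Set.Iic T))
    (hconst : ∀ t ≤ (0 : ℝ), f t = f 0)
    (hf' : ∀ s ∈ Set.Ioc (0 : ℝ) T, HasDerivWithinAt f (f' s) (Set.Ioc 0 T) s)
    (hint : IntegrableOn f' (Set.Ioo 0 T) volume)
    (hf'c : ContinuousOn f' (Set.Ioc 0 T)) :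
    ∀ t ∈ Set.Ioc (0 : ℝ) T,
      Tendsto
        (fun e : ℝ => ∫ s in Set.Ioi e,
          (f t - f (t - s)) * s * ((β / Real.Gamma (1 - β)) * s ^ (-β - 2)))
        (nhdsWithin 0 (Set.Ioi 0))
        (nhds ((1 / Real.Gamma (1 - β)) *
          ∫ s in (0 : ℝ)..t, f' s * (t - s) ^ (-β))) := by
  rintro t ⟨ht0, htT⟩
  obtain ⟨hβ0, hβ1⟩ := hβ
  have hint_t : IntegrableOn f' (Ioo 0 t) := hint.mono_set (Ioo_subset_Ioo_right htT)
  have hincrement : ∀ s, 0 ≤ s → f t - f (t - s) = ∫ u in Ioo 0 t, (Ici (t - s)).indicator f' u :=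
    fun s hs => (integral_Ioo_indicator_Ici_eq_sub ht0.le (by linarith)
      (hfc.mono fun x hx => hx.2.trans htT) hconst
      (fun x hx => (hf' x ⟨hx.1, hx.2.le.trans htT⟩).hasDerivAt
        (Ioc_mem_nhds hx.1 (hx.2.trans_le htT))) hint_t).symm
  have hfubini : ∀ ε > 0, ∫ s in Ioi ε,
      (f t - f (t - s)) * s * ((β / Real.Gamma (1 - β)) * s ^ (-β - 2))
      = 1 / Real.Gamma (1 - β) * ∫ u in Ioo 0 t, f' u * max ε (t - u) ^ (-β) := by
    intro ε hε
    rw [← integral_Ioi_integral_indicator_mul_rpow hβ0 hε t hint_t, ← integral_const_mul]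
    refine setIntegral_congr_fun measurableSet_Ioi fun s (hs : ε < s) => ?_
    rw [← hincrement s (hε.trans hs).le, show -β - 1 = -β - 2 + 1 by ring,
      Real.rpow_add_one (hε.trans hs).ne']
    ring
  rw [intervalIntegral.integral_of_le ht0.le, integral_Ioc_eq_integral_Ioo]
  have hlim := tendsto_integral_mul_max_rpow hβ0.le
    (ae_restrict_of_forall_mem measurableSet_Ioo fun u hu => hu.2) hint_t.aestronglyMeasurable
    (integrableOn_mul_sub_rpow_neg hβ1 hint_t (hf'c.mono (Ioc_subset_Ioc_right htT)))
  refine (hlim.const_mul _).congr' ?_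
  filter_upwards [self_mem_nhdsWithin] with ε hε using (hfubini ε hε).symm

/-- The infinite-horizon nonlocal gradient with kernel
`ρ_∞(s) = (β/Γ(1-β)) s^{-β-2}` recovers the Caputo fractional derivative:
for `f` continuous on `(-∞,T]`, constant on `(-∞,0]` and differentiable on
`(0,T]` with `f' ∈ L¹(0,T) ∩ C((0,T])`, and every `t ∈ (0,T]`,
`lim_{ε→0⁺} ∫_ε^∞ (f(t)-f(t-s)) s ρ_∞(s) ds
  = (1/Γ(1-β)) ∫₀^t f'(s) (t-s)^{-β} ds`. -/
theorem stmt5 (β T : ℝ) (hβ : β ∈ Set.Ioo (0 : ℝ) 1) (hT : 0 < T)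
    (f f' : ℝ → ℝ) (hfc : ContinuousOn f (Set.Iic T))
    (hconst : ∀ t ≤ (0 : ℝ), f t = f 0)
    (hf' : ∀ s ∈ Set.Ioc (0 : ℝ) T, HasDerivWithinAt f (f' s) (Set.Ioc 0 T) s)
    (hint : IntegrableOn f' (Set.Ioo 0 T) volume)
    (hf'c : ContinuousOn f' (Set.Ioc 0 T)) :
    ∀ t ∈ Set.Ioc (0 : ℝ) T,
      Tendsto
        (fun e : ℝ => ∫ s in Set.Ioi e,
          (f t - f (t - s)) * s * ((β / Real.Gamma (1 - β)) * s ^ (-β - 2)))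
        (nhdsWithin 0 (Set.Ioi 0))
        (nhds ((1 / Real.Gamma (1 - β)) *
          ∫ s in (0 : ℝ)..t, f' s * (t - s) ^ (-β))) :=
  stmt5_general β T hβ f f' hfc hconst hf' hint hf'c
end

section
/- Let D ∈ [0, 1), τ^Y > 0, and let τ, R, γ̇, Ḋ, 𝒟ᵛᵉ, 𝒟ᵛᵖ, Y be real numbers with γ̇ ≥ 0, Ḋ ≥ 0, 𝒟ᵛᵉ ≥ 0, 𝒟ᵛᵖ ≥ 0, Y ≤ 0, satisfying the persistency condition (|τ| − ((1 − D) τ^Y + R)) · γ̇ = 0. Define the visco-plastic strain rate ε̇ᵛᵖ = sign(τ) · γ̇ (with sign(0) = 0) and the hardening rate α̇ = γ̇. Then the total mechanical dissipation satisfies τ · ε̇ᵛᵖ − R · α̇ − Y · Ḋ + (1 − D)(𝒟ᵛᵉ + 𝒟ᵛᵖ) = (1 − D)(τ^Y · γ̇ + 𝒟ᵛᵉ + 𝒟ᵛᵖ) − Y · Ḋ ≥ 0. -/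
/-!
On the plastic branch the persistency condition pins `|τ|` to the current yield threshold
`(1 - D) τ^Y + R`, so the plastic power `τ ε̇ᵛᵖ = |τ| γ̇` minus the hardening power `R α̇` is
exactly `(1 - D) τ^Y γ̇`. Every term of the resulting expression is then nonnegative because
`D < 1`, `γ̇ ≥ 0`, and the damage dissipation `-Y Ḋ` is nonnegative since `Y ≤ 0 ≤ Ḋ`.
-/

theorem Real.self_mul_sign (r : ℝ) : r * Real.sign r = |r| := by
  rcases lt_trichotomy r 0 with h | rfl | h
  · rw [Real.sign_of_neg h, abs_of_neg h, mul_neg_one]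
  · simp
  · rw [Real.sign_of_pos h, abs_of_pos h, mul_one]

theorem plastic_power_sub_hardening_eq_of_persistency {τ k R γ : ℝ}
    (hpers : (|τ| - (k + R)) * γ = 0) :
    τ * (Real.sign τ * γ) - R * γ = k * γ := by
  rw [← mul_assoc, Real.self_mul_sign]
  linear_combination hpers

/-- Positive dissipation for the damaged fractional visco-elasto-plastic model:
with `ε̇ᵛᵖ = sign(τ) γ̇` and `α̇ = γ̇`, under the persistency condition
`(|τ| - ((1-D)τ^Y + R)) γ̇ = 0`, the total mechanical dissipation equals
`(1-D)(τ^Y γ̇ + 𝒟ᵛᵉ + 𝒟ᵛᵖ) - Y Ḋ` and is nonnegative. -/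
theorem stmt7 (D τY τ R γ' D' Dve Dvp Y : ℝ)
    (hD : D ∈ Set.Ico (0 : ℝ) 1) (hτY : 0 < τY)
    (hγ : 0 ≤ γ') (hD' : 0 ≤ D') (hDve : 0 ≤ Dve) (hDvp : 0 ≤ Dvp) (hY : Y ≤ 0)
    (hpers : (|τ| - ((1 - D) * τY + R)) * γ' = 0) :
    τ * (Real.sign τ * γ') - R * γ' - Y * D' + (1 - D) * (Dve + Dvp)
      = (1 - D) * (τY * γ' + Dve + Dvp) - Y * D' ∧
    0 ≤ (1 - D) * (τY * γ' + Dve + Dvp) - Y * D' := by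
  refine ⟨?_, ?_⟩
  · linear_combination plastic_power_sub_hardening_eq_of_persistency hpers
  · have hintact : 0 ≤ 1 - D := sub_nonneg.2 hD.2.le
    have hmech : 0 ≤ τY * γ' + Dve + Dvp :=
      add_nonneg (add_nonneg (mul_nonneg hτY.le hγ) hDve) hDvp
    have hdamage : Y * D' ≤ 0 := mul_nonpos_of_nonpos_of_nonneg hY hD'
    linarith [mul_nonneg hintact hmech]
end

section
/- Let 0 < β < 1, 𝔼 > 0, Δt > 0, n ≥ 0 an integer, t_k = k Δt, and let ε₀, ε₁, …, ε_{n+1} be real numbers. Then (𝔼 / (2 Γ(1 − β))) · Σ_{i=0}^{n} Σ_{j=0}^{n} [(ε_{n+1−i} − ε_{n−i})(ε_{n+1−j} − ε_{n−j}) / Δt²] · ∫_{t_i}^{t_{i+1}} ∫_{t_j}^{t_{j+1}} (v₁ + v₂)^{−β} dv₁ dv₂ = (𝔼 / (2 Δt^{β} Γ(3 − β))) · Σ_{i=0}^{n} Σ_{j=0}^{n} b^{(β)}_{ij} (ε_{n+1−i} − ε_{n−i})(ε_{n+1−j} − ε_{n−j}), where b^{(β)}_{ij} = (i + j)^{2−β}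 − 2 (i + j + 1)^{2−β} + (i + j + 2)^{2−β}. -/
lemma my_int_shift (r a b c : ℝ) (hr : -1 < r) :
    ∫ x in a..b, (x + c) ^ r = ((b + c) ^ (r + 1) - (a + c) ^ (r + 1)) / (r + 1) := by
  rw [intervalIntegral.integral_comp_add_right (fun x => x ^ r) c]
  exact integral_rpow (Or.inl hr)

lemma my_key (β Δt : ℝ) (hβ : β ∈ Set.Ioo (0:ℝ) 1) (hΔt : 0 < Δt) (i j : ℕ) :
    (∫ v₂ in ((i : ℝ) * Δt)..(((i : ℝ) + 1) * Δt),
       ∫ v₁ in ((j : ℝ) * Δt)..(((j : ℝ) + 1) * Δt), (v₁ + v₂) ^ (-β))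
    = Δt ^ (2 - β) * (((i : ℝ) + j) ^ (2 - β) - 2 * ((i : ℝ) + j + 1) ^ (2 - β)
        + ((i : ℝ) + j + 2) ^ (2 - β)) / ((1 - β) * (2 - β)) := by
  obtain ⟨hβ0, hβ1⟩ := hβ
  have hr : (-1 : ℝ) < -β := by linarith
  have hr2 : (-1 : ℝ) < 1 - β := by linarith
  have hcont : ∀ c : ℝ, Continuous fun x : ℝ => (c + x) ^ (1 - β) :=
    fun c => (continuous_const.add continuous_id).rpow_const (fun x => Or.inr (by linarith))
  have h1 : ∀ v₂ : ℝ, (∫ v₁ in ((j : ℝ) * Δt)..(((j : ℝ) + 1) * Δt), (v₁ + v₂) ^ (-β))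
      = ((((j:ℝ)+1) * Δt + v₂) ^ (1 - β) / (1 - β) - ((j:ℝ) * Δt + v₂) ^ (1 - β) / (1 - β)) := by
    intro v₂
    rw [my_int_shift (-β) _ _ _ hr]
    have : -β + 1 = 1 - β := by ring
    rw [this]; ring
  simp only [h1]
  rw [intervalIntegral.integral_sub
    (((hcont _).div_const _).intervalIntegrable _ _)
    (((hcont _).div_const _).intervalIntegrable _ _),
    intervalIntegral.integral_div, intervalIntegral.integral_div]
  have hsh : ∀ c : ℝ, (∫ v₂ in ((i : ℝ) * Δt)..(((i : ℝ) + 1) * Δt), (c + v₂) ^ (1 - β))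
      = ((((i:ℝ)+1) * Δt + c) ^ (2 - β) - ((i:ℝ) * Δt + c) ^ (2 - β)) / (2 - β) := by
    intro c
    have : ∀ v₂ : ℝ, (c + v₂) ^ (1-β) = (v₂ + c) ^ (1-β) := fun v₂ => by rw [add_comm]
    simp only [this]
    rw [my_int_shift (1-β) _ _ _ hr2]
    have : 1 - β + 1 = 2 - β := by ring
    rw [this]
  rw [hsh, hsh]
  have e1 : ((i:ℝ)+1) * Δt + ((j:ℝ)+1) * Δt = ((i:ℝ) + j + 2) * Δt := by ring
  have e2 : (i:ℝ) * Δt + ((j:ℝ)+1) * Δt = ((i:ℝ) + j + 1) * Δt := by ring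
  have e3 : ((i:ℝ)+1) * Δt + (j:ℝ) * Δt = ((i:ℝ) + j + 1) * Δt := by ring
  have e4 : (i:ℝ) * Δt + (j:ℝ) * Δt = ((i:ℝ) + j) * Δt := by ring
  rw [e1, e2, e3, e4]
  have hmul : ∀ k : ℝ, 0 ≤ k → (k * Δt) ^ (2 - β) = k ^ (2 - β) * Δt ^ (2 - β) :=
    fun k hk => Real.mul_rpow hk hΔt.le
  rw [hmul _ (by positivity), hmul _ (by positivity), hmul _ (by positivity)]
  field_simp
  ring

/-- The backward-Euler approximation of the fractional Helmholtz free-energy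
density equals its closed form with the Hankel convolution weights
`b^{(β)}_{ij} = (i+j)^{2-β} - 2(i+j+1)^{2-β} + (i+j+2)^{2-β}`. -/
theorem stmt9 (β E Δt : ℝ) (hβ : β ∈ Set.Ioo (0 : ℝ) 1) (hE : 0 < E) (hΔt : 0 < Δt)
    (n : ℕ) (ε : ℕ → ℝ) :
    (E / (2 * Real.Gamma (1 - β))) *
      ∑ i ∈ Finset.range (n + 1), ∑ j ∈ Finset.range (n + 1),
        ((ε (n + 1 - i) - ε (n - i)) * (ε (n + 1 - j) - ε (n - j)) / Δt ^ 2) *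
          ∫ v₂ in ((i : ℝ) * Δt)..(((i : ℝ) + 1) * Δt),
            ∫ v₁ in ((j : ℝ) * Δt)..(((j : ℝ) + 1) * Δt), (v₁ + v₂) ^ (-β)
      = (E / (2 * Δt ^ β * Real.Gamma (3 - β))) *
          ∑ i ∈ Finset.range (n + 1), ∑ j ∈ Finset.range (n + 1),
            (((i : ℝ) + (j : ℝ)) ^ (2 - β) - 2 * ((i : ℝ) + (j : ℝ) + 1) ^ (2 - β)
              + ((i : ℝ) + (j : ℝ) + 2) ^ (2 - β)) *
              ((ε (n + 1 - i) - ε (n - i)) * (ε (n + 1 - j) - ε (n - j))) := by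
  obtain ⟨hβ0, hβ1⟩ := hβ
  have hΓ1 : 0 < Real.Gamma (1 - β) := Real.Gamma_pos_of_pos (by linarith)
  have h1β : (1 : ℝ) - β ≠ 0 := by linarith
  have h2β : (2 : ℝ) - β ≠ 0 := by linarith
  have hΓ3 : Real.Gamma (3 - β) = (2 - β) * ((1 - β) * Real.Gamma (1 - β)) := by
    have e1 : (3 : ℝ) - β = (2 - β) + 1 := by ring
    have e2 : (2 : ℝ) - β = (1 - β) + 1 := by ring
    rw [e1, Real.Gamma_add_one h2β, e2, Real.Gamma_add_one h1β]
  have hpow : Δt ^ (2 - β) = Δt ^ 2 / Δt ^ β := by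
    rw [Real.rpow_sub hΔt]
    norm_num [Real.rpow_two]
  have hβpos : (0 : ℝ) < Δt ^ β := Real.rpow_pos_of_pos hΔt β
  simp only [Finset.mul_sum]
  refine Finset.sum_congr rfl fun i _ => Finset.sum_congr rfl fun j _ => ?_
  rw [my_key β Δt ⟨hβ0, hβ1⟩ hΔt i j, hΓ3, hpow]
  field_simp
end

section
/- Let β ∈ (0, 1), T > 0, and let ε : [0, T] → ℝ be twice continuously differentiable. Then there exists a constant C > 0, depending only on ε, β, and T, such that for every positive integer N, setting Δt = T/N and t_k = k Δt, and for every integer 0 ≤ n ≤ N − 1, the local truncation error satisfies | ∫₀^{t_{n+1}} ∫₀^{t_{n+1}} ε′(s₁) ε′(s₂) (2 t_{n+1} − s₁ − s₂)^{−β} ds₁ ds₂ − Σ_{i=0}^{n} Σ_{j=0}^{n} [(ε(t_{i+1}) − ε(t_i))(ε(t_{j+1}) − ε(t_j)) / Δt²] · ∫_{t_i}^{t_{i+1}} ∫_{t_j}^{t_{j+1}} (2 t_{n+1} − s₁ − s₂)^{−β} ds₁ ds₂ | ≤ C Δt^{2−β}. -/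
open MeasureTheory intervalIntegral Set Finset

private lemma aux_ker_int (β : ℝ) (hβ1 : β < 1) (c a b : ℝ) :
    IntervalIntegrable (fun s => (c - s) ^ (-β)) volume a b := by
  have h := ((intervalIntegrable_rpow' (a := c - b) (b := c - a)
    (by linarith : (-1:ℝ) < -β)).comp_sub_left c).symm
  simpa using h

private lemma aux_ker_val (β : ℝ) (hβ1 : β < 1) (c a b : ℝ) :
    ∫ s in a..b, (c - s) ^ (-β) = ((c - a) ^ (1 - β) - (c - b) ^ (1 - β)) / (1 - β) := by
  rw [intervalIntegral.integral_comp_sub_left (fun s => s ^ (-β)) c]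
  rw [integral_rpow (Or.inl (by linarith))]
  ring_nf

private lemma aux_subadd (p x y : ℝ) (hp0 : 0 ≤ p) (hp1 : p ≤ 1) (hx : 0 ≤ x) (hy : 0 ≤ y) :
    (x + y) ^ p ≤ x ^ p + y ^ p := by
  have h := NNReal.rpow_add_le_add_rpow (Real.toNNReal x) (Real.toNNReal y) hp0 hp1
  have := (NNReal.coe_le_coe).2 h
  push_cast at this
  rwa [Real.coe_toNNReal _ hx, Real.coe_toNNReal _ hy] at this

set_option maxHeartbeats 1600000 in
/-- Local truncation error of the backward-Euler discretization of the
double-convolution form of the fractional free energy: for `ε` twice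
continuously differentiable on `[0,T]`, there is `C > 0` (depending only on
`ε`, `β`, `T`) such that for every `N` and every `0 ≤ n ≤ N-1` (with
`Δt = T/N`, `t_k = k Δt`), the error is at most `C Δt^{2-β}`. -/
theorem stmt12 (β T : ℝ) (hβ : β ∈ Set.Ioo (0 : ℝ) 1) (hT : 0 < T)
    (ε ε' ε'' : ℝ → ℝ)
    (hε : ∀ s ∈ Set.Icc (0 : ℝ) T, HasDerivWithinAt ε (ε' s) (Set.Icc 0 T) s)
    (hε'd : ∀ s ∈ Set.Icc (0 : ℝ) T, HasDerivWithinAt ε' (ε'' s) (Set.Icc 0 T) s)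
    (hε'' : ContinuousOn ε'' (Set.Icc 0 T)) :
    ∃ C > 0, ∀ N : ℕ, 0 < N → ∀ n : ℕ, n ≤ N - 1 →
      |(∫ s₂ in (0 : ℝ)..(((n : ℝ) + 1) * (T / N)),
          ∫ s₁ in (0 : ℝ)..(((n : ℝ) + 1) * (T / N)),
            ε' s₁ * ε' s₂ * (2 * ((n : ℝ) + 1) * (T / N) - s₁ - s₂) ^ (-β))
        - ∑ i ∈ Finset.range (n + 1), ∑ j ∈ Finset.range (n + 1),
            ((ε (((i : ℝ) + 1) * (T / N)) - ε ((i : ℝ) * (T / N))) *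
                (ε (((j : ℝ) + 1) * (T / N)) - ε ((j : ℝ) * (T / N))) / (T / N) ^ 2) *
              ∫ s₂ in ((i : ℝ) * (T / N))..(((i : ℝ) + 1) * (T / N)),
                ∫ s₁ in ((j : ℝ) * (T / N))..(((j : ℝ) + 1) * (T / N)),
                  (2 * ((n : ℝ) + 1) * (T / N) - s₁ - s₂) ^ (-β)|
        ≤ C * (T / N) ^ (2 - β) := by
  obtain ⟨hβ0, hβ1⟩ := hβ
  have hp0 : (0:ℝ) < 1 - β := by linarith
  -- continuity of ε, ε'
  have hcε : ContinuousOn ε (Icc 0 T) := fun s hs => (hε s hs).continuousWithinAt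
  have hcε' : ContinuousOn ε' (Icc 0 T) := fun s hs => (hε'd s hs).continuousWithinAt
  obtain ⟨M1, hM1⟩ := isCompact_Icc.exists_bound_of_continuousOn hcε'
  obtain ⟨M2, hM2⟩ := isCompact_Icc.exists_bound_of_continuousOn hε''
  set M' : ℝ := |M1| + 1 with hM'def
  set M'' : ℝ := |M2| + 1 with hM''def
  have hM'0 : 0 < M' := by positivity
  have hM''0 : 0 < M'' := by positivity
  have hbε' : ∀ s ∈ Icc (0:ℝ) T, |ε' s| ≤ M' := fun s hs => by
    have := hM1 s hs; rw [Real.norm_eq_abs] at this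
    exact this.trans (by rw [hM'def]; nlinarith [le_abs_self M1])
  have hbε'' : ∀ s ∈ Icc (0:ℝ) T, |ε'' s| ≤ M'' := fun s hs => by
    have := hM2 s hs; rw [Real.norm_eq_abs] at this
    exact this.trans (by rw [hM''def]; nlinarith [le_abs_self M2])
  -- Lipschitz bound for ε' on [0,T]
  have hlipε' : ∀ x ∈ Icc (0:ℝ) T, ∀ y ∈ Icc (0:ℝ) T, |ε' y - ε' x| ≤ M'' * |y - x| := by
    intro x hx y hy
    have := Convex.norm_image_sub_le_of_norm_hasDerivWithin_le hε'd
      (fun s hs => by simpa [Real.norm_eq_abs] using hbε'' s hs) (convex_Icc 0 T) hx hy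
    simpa [Real.norm_eq_abs] using this
  -- continuous bounded Lipschitz extension of ε'
  obtain ⟨e, heε, hecont, hebd, helip⟩ :
      ∃ e : ℝ → ℝ, (∀ s ∈ Icc (0:ℝ) T, e s = ε' s) ∧ Continuous e ∧
        (∀ s, |e s| ≤ M') ∧ ∀ x y : ℝ, |e x - e y| ≤ M'' * |x - y| := by
    have hclmem : ∀ s : ℝ, min T (max 0 s) ∈ Icc (0:ℝ) T :=
      fun s => ⟨le_min hT.le (le_max_left 0 s), min_le_left _ _⟩
    refine ⟨fun s => ε' (min T (max 0 s)), ?_, ?_, ?_, ?_⟩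
    · intro s hs
      show ε' (min T (max 0 s)) = ε' s
      rw [max_eq_right hs.1, min_eq_right hs.2]
    · exact hcε'.comp_continuous
        (continuous_const.min (continuous_const.max continuous_id)) hclmem
    · intro s; exact hbε' _ (hclmem s)
    · intro x y
      have h1 := hlipε' _ (hclmem y) _ (hclmem x)
      refine h1.trans ?_
      apply mul_le_mul_of_nonneg_left _ hM''0.le
      have h2 : |min T (max 0 x) - min T (max 0 y)| ≤ max |T - T| |max 0 x - max 0 y| :=
        abs_min_sub_min_le_max _ _ _ _
      have h3 : |max 0 x - max 0 y| ≤ |x - y| := by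
        rw [max_comm 0 x, max_comm 0 y]; exact abs_max_sub_max_le_abs x y 0
      have h4 : |x - y| ≥ 0 := abs_nonneg _
      refine h2.trans ?_
      simp only [sub_self, abs_zero]
      exact max_le h4 h3
  refine ⟨2 * T * M' * M'' / (1 - β) + 1, by positivity, ?_⟩
  intro N hN n hn
  have hNR : (0:ℝ) < N := by exact_mod_cast hN
  set δ : ℝ := T / N with hδdef
  have hδ : 0 < δ := by positivity
  have hn1N : n + 1 ≤ N := by omega
  have hnN : (n:ℝ) + 1 ≤ N := by exact_mod_cast hn1N
  set t : ℝ := ((n:ℝ) + 1) * δ with htdef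
  have ht0 : 0 < t := by positivity
  have htT : t ≤ T := by
    rw [htdef, hδdef]
    calc ((n:ℝ)+1) * (T/N) ≤ (N:ℝ) * (T/N) := by
          apply mul_le_mul_of_nonneg_right hnN; positivity
      _ = T := by field_simp
  have hδT : δ ≤ T := by
    rw [hδdef]
    calc T / N ≤ T / 1 := by apply div_le_div_of_nonneg_left hT.le one_pos; exact_mod_cast hN
      _ = T := by ring
  set a : ℕ → ℝ := fun i => (i:ℝ) * δ with hadef
  have ha0 : a 0 = 0 := by simp [hadef]
  have hasucc : ∀ i : ℕ, a (i+1) = ((i:ℝ)+1) * δ := by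
    intro i; simp only [hadef]; push_cast; ring
  have hat : a (n+1) = t := by rw [hasucc, htdef]
  have haδ : ∀ i, a (i+1) - a i = δ := by
    intro i; rw [hasucc]; simp only [hadef]; ring
  have hamono : ∀ i : ℕ, a i ≤ a (i+1) := fun i => by
    have := haδ i; linarith
  have ha_nonneg : ∀ i, 0 ≤ a i := fun i => by positivity
  have ha_le_t : ∀ i : ℕ, i ≤ n + 1 → a i ≤ t := by
    intro i hi; rw [← hat]; simp only [hadef]
    apply mul_le_mul_of_nonneg_right _ hδ.le
    exact_mod_cast hi
  have ha_le_T : ∀ i : ℕ, i ≤ n + 1 → a i ≤ T := fun i hi => (ha_le_t i hi).trans htT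
  set k : ℝ → ℝ → ℝ := fun s₂ s₁ => (2 * ((n:ℝ)+1) * δ - s₁ - s₂) ^ (-β) with hkdef
  have hk2t : ∀ s₂ s₁, 2 * ((n:ℝ)+1) * δ - s₁ - s₂ = (2*t - s₂) - s₁ := by
    intro s₂ s₁; rw [htdef]; ring
  have hkfun : ∀ s₂, (fun s₁ => k s₂ s₁) = fun s₁ => ((2*t - s₂) - s₁) ^ (-β) := by
    intro s₂; funext s₁; simp only [hkdef]; rw [hk2t]
  -- antitonicity of rpow with negative exponent
  have hrle : ∀ {x y : ℝ}, 0 < x → x ≤ y → y ^ (-β) ≤ x ^ (-β) :=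
    fun hx hxy => Real.rpow_le_rpow_of_nonpos hx hxy (by linarith)
  have hk_nonneg : ∀ {s₂ s₁ : ℝ}, s₂ ≤ t → s₁ ≤ t → 0 ≤ k s₂ s₁ := by
    intro s₂ s₁ h2 h1
    simp only [hkdef]
    apply Real.rpow_nonneg
    rw [hk2t s₂ s₁]; linarith
  -- monotone in s₁ : for s₂ < t, x ≤ y ≤ t
  have hk_mono1 : ∀ {s₂ x y : ℝ}, s₂ < t → x ≤ y → y ≤ t → k s₂ x ≤ k s₂ y := by
    intro s₂ x y h2 hxy hyt
    simp only [hkdef]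
    rw [hk2t, hk2t]
    exact hrle (by linarith) (by linarith)
  -- monotone in s₂ : for s₁ ≤ t, x ≤ y < t
  have hk_mono2 : ∀ {s₁ x y : ℝ}, s₁ ≤ t → x ≤ y → y < t → k x s₁ ≤ k y s₁ := by
    intro s₁ x y h1 hxy hyt
    simp only [hkdef]
    rw [hk2t, hk2t]
    exact hrle (by linarith) (by linarith)
  have hkint : ∀ s₂ u v : ℝ, IntervalIntegrable (fun s₁ => k s₂ s₁) volume u v := by
    intro s₂ u v; rw [hkfun]; exact aux_ker_int β hβ1 _ u v
  have hkval : ∀ s₂ u v : ℝ, ∫ s₁ in u..v, k s₂ s₁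
      = ((2*t - s₂ - u) ^ (1-β) - (2*t - s₂ - v) ^ (1-β)) / (1-β) := by
    intro s₂ u v
    rw [show (∫ s₁ in u..v, k s₂ s₁) = ∫ s₁ in u..v, ((2*t - s₂) - s₁) ^ (-β) by
      rw [← hkfun]]
    rw [aux_ker_val β hβ1 (2*t - s₂) u v]
  have hekint : ∀ s₂ u v : ℝ, IntervalIntegrable (fun s₁ => e s₁ * k s₂ s₁) volume u v :=
    fun s₂ u v => (hkint s₂ u v).continuousOn_mul hecont.continuousOn
  -- the averages
  set q : ℕ → ℝ := fun i => (ε (a (i+1)) - ε (a i)) / δ with hqdef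
  have hFTC : ∀ i ≤ n, ∫ s in a i..a (i+1), e s = q i * δ := by
    intro i hi
    have hiT : a (i+1) ≤ T := ha_le_T (i+1) (by omega)
    have hsub : Icc (a i) (a (i+1)) ⊆ Icc 0 T := Icc_subset_Icc (ha_nonneg i) hiT
    have h1 : ∫ s in a i..a (i+1), e s = ε (a (i+1)) - ε (a i) := by
      apply intervalIntegral.integral_eq_sub_of_hasDeriv_right_of_le (hamono i)
        (hcε.mono hsub)
      · intro x hx
        have hx0 : 0 < x := lt_of_le_of_lt (ha_nonneg i) hx.1
        have hxT : x < T := lt_of_lt_of_le hx.2 hiT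
        have hd : HasDerivAt ε (ε' x) x :=
          (hε x ⟨hx0.le, hxT.le⟩).hasDerivAt (Icc_mem_nhds hx0 hxT)
        have : e x = ε' x := heε x ⟨hx0.le, hxT.le⟩
        rw [this]
        exact hd.hasDerivWithinAt
      · exact hecont.intervalIntegrable _ _
    rw [h1, hqdef]
    field_simp
  have hqbd : ∀ i ≤ n, |q i| ≤ M' := by
    intro i hi
    have h2 := intervalIntegral.norm_integral_le_of_norm_le_const
      (a := a i) (b := a (i+1)) (C := M') (f := e)
      (fun x _ => by rw [Real.norm_eq_abs]; exact hebd x)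
    rw [hFTC i hi, Real.norm_eq_abs, haδ i, abs_mul, abs_of_pos hδ] at h2
    exact le_of_mul_le_mul_right h2 hδ
  have havg : ∀ i ≤ n, ∀ s ∈ Icc (a i) (a (i+1)), |e s - q i| ≤ M'' * δ := by
    intro i hi s hs
    have h0 : ∫ σ in a i..a (i+1), (e s - e σ) = e s * δ - q i * δ := by
      rw [intervalIntegral.integral_sub intervalIntegrable_const
        (hecont.intervalIntegrable _ _), hFTC i hi, intervalIntegral.integral_const,
        haδ i, smul_eq_mul]
      ring
    have h1 : |∫ σ in a i..a (i+1), (e s - e σ)| ≤ (M'' * δ) * |a (i+1) - a i| := by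
      have h1' := intervalIntegral.norm_integral_le_of_norm_le_const
        (a := a i) (b := a (i+1)) (C := M'' * δ) (f := fun σ => e s - e σ) ?_
      · rwa [Real.norm_eq_abs] at h1'
      · intro σ hσ
        rw [Set.uIoc_of_le (hamono i)] at hσ
        rw [Real.norm_eq_abs]
        refine (helip s σ).trans ?_
        apply mul_le_mul_of_nonneg_left _ hM''0.le
        rw [abs_le]
        have h5 := hs.1; have h6 := hs.2; have h7 := hσ.1; have h8 := hσ.2
        have h9 := haδ i
        constructor <;> linarith
    rw [haδ i, abs_of_pos hδ] at h1
    have h3 : e s - q i = (∫ σ in a i..a (i+1), (e s - e σ)) / δ := by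
      rw [h0]; field_simp
    rw [h3, abs_div, abs_of_pos hδ, div_le_iff₀ hδ]
    exact h1
  set κ : ℕ → ℝ → ℝ := fun j s₂ => ∫ s₁ in a j..a (j+1), k s₂ s₁ with hκdef
  have hκval : ∀ j s₂, κ j s₂
      = ((2*t - s₂ - a j) ^ (1-β) - (2*t - s₂ - a (j+1)) ^ (1-β)) / (1-β) :=
    fun j s₂ => hkval s₂ _ _
  have hκcont : ∀ j, Continuous (κ j) := by
    intro j
    have : κ j = fun s₂ =>
        ((2*t - s₂ - a j) ^ (1-β) - (2*t - s₂ - a (j+1)) ^ (1-β)) / (1-β) :=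
      funext (hκval j)
    rw [this]
    apply Continuous.div_const
    have hc1 : Continuous fun s₂:ℝ => 2*t - s₂ - a j :=
      (continuous_const.sub continuous_id).sub continuous_const
    have hc2 : Continuous fun s₂:ℝ => 2*t - s₂ - a (j+1) :=
      (continuous_const.sub continuous_id).sub continuous_const
    exact (hc1.rpow_const (fun x => Or.inr hp0.le)).sub
      (hc2.rpow_const (fun x => Or.inr hp0.le))
  set G : ℝ → ℝ := fun s₂ => ∫ s₁ in (0:ℝ)..t, e s₁ * k s₂ s₁ with hGdef
  set F : ℝ → ℝ := fun s₂ => ∑ j ∈ Finset.range (n+1), q j * κ j s₂ with hFdef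
  have hFcont : Continuous F := by
    rw [hFdef]; exact continuous_finset_sum _ fun j _ => continuous_const.mul (hκcont j)
  have hGsum : ∀ s₂, G s₂ = ∑ j ∈ Finset.range (n+1), ∫ s₁ in a j..a (j+1), e s₁ * k s₂ s₁ := by
    intro s₂
    rw [hGdef]
    rw [intervalIntegral.sum_integral_adjacent_intervals (fun j _ => hekint s₂ (a j) (a (j+1)))]
    rw [ha0, hat]
  have hGbd : ∀ s₂ ∈ Icc (0:ℝ) t, |G s₂| ≤ M' * ((2*T) ^ (1-β) / (1-β)) := by
    intro s₂ hs₂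
    have c1 : |G s₂| ≤ ∫ s₁ in (0:ℝ)..t, |e s₁ * k s₂ s₁| := by
      rw [hGdef]; exact intervalIntegral.abs_integral_le_integral_abs ht0.le
    have c2 : ∫ s₁ in (0:ℝ)..t, |e s₁ * k s₂ s₁| ≤ ∫ s₁ in (0:ℝ)..t, M' * k s₂ s₁ := by
      apply intervalIntegral.integral_mono_on ht0.le ((hekint s₂ 0 t).abs)
        ((hkint s₂ 0 t).const_mul M')
      intro s₁ hs₁
      rw [abs_mul, abs_of_nonneg (hk_nonneg hs₂.2 hs₁.2)]
      exact mul_le_mul_of_nonneg_right (hebd s₁) (hk_nonneg hs₂.2 hs₁.2)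
    have c3 : ∫ s₁ in (0:ℝ)..t, M' * k s₂ s₁
        = M' * (((2*t - s₂ - 0) ^ (1-β) - (2*t - s₂ - t) ^ (1-β)) / (1-β)) := by
      rw [intervalIntegral.integral_const_mul, hkval]
    have c4 : ((2*t - s₂ - 0) ^ (1-β) - (2*t - s₂ - t) ^ (1-β)) / (1-β)
        ≤ (2*T) ^ (1-β) / (1-β) := by
      rw [div_le_div_iff_of_pos_right hp0]
      have h1 : (2*t - s₂ - 0) ^ (1-β) ≤ (2*T) ^ (1-β) :=
        Real.rpow_le_rpow (by linarith [hs₂.1, hs₂.2]) (by linarith [hs₂.1, htT]) hp0.le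
      have h2 : 0 ≤ (2*t - s₂ - t) ^ (1-β) := Real.rpow_nonneg (by linarith [hs₂.2]) _
      linarith
    refine c1.trans (c2.trans ?_)
    rw [c3]
    exact mul_le_mul_of_nonneg_left c4 hM'0.le
  have heGint : IntervalIntegrable (fun s₂ => e s₂ * G s₂) volume 0 t := by
    have hrpm : Measurable (fun x : ℝ => x ^ (-β)) :=
      measurable_of_continuousOn_compl_singleton 0
        (fun x hx => (Real.continuousAt_rpow_const x (-β) (Or.inl hx)).continuousWithinAt)
    have hjm : Measurable (fun z : ℝ × ℝ => e z.2 * k z.1 z.2) := by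
      apply Measurable.mul (hecont.measurable.comp measurable_snd)
      simp only [hkdef]
      exact hrpm.comp ((measurable_const.sub measurable_snd).sub measurable_fst)
    have hGsm : StronglyMeasurable G := by
      have h0 := (hjm.stronglyMeasurable).integral_prod_right'
        (ν := volume.restrict (Ioc 0 t))
      have : G = fun s₂ => ∫ s₁ in Ioc (0:ℝ) t, e s₁ * k s₂ s₁ := by
        funext s₂
        rw [hGdef]
        exact intervalIntegral.integral_of_le ht0.le
      rw [this]
      exact h0
    rw [intervalIntegrable_iff_integrableOn_Ioc_of_le ht0.le]
    apply MeasureTheory.Integrable.mono'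
      (g := fun _ => M' * (M' * ((2*T) ^ (1-β) / (1-β)))) (integrable_const _)
    · exact (hecont.aestronglyMeasurable.mul hGsm.aestronglyMeasurable).restrict
    · refine (ae_restrict_iff' measurableSet_Ioc).2 (Filter.Eventually.of_forall
        fun s₂ hs₂ => ?_)
      rw [Real.norm_eq_abs, abs_mul]
      exact mul_le_mul (hebd s₂) (hGbd s₂ (Ioc_subset_Icc_self hs₂)) (abs_nonneg _) hM'0.le
  have heFint : IntervalIntegrable (fun s₂ => e s₂ * F s₂) volume 0 t :=
    (hecont.mul hFcont).intervalIntegrable 0 t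
  -- the E1 bound
  have hD : ∀ s₂ ∈ Ico (0:ℝ) t, |G s₂ - F s₂| ≤ M'' * δ^2 * (t - s₂) ^ (-β) := by
    intro s₂ hs₂
    obtain ⟨hs₂0, hs₂t⟩ := hs₂
    have hGF : G s₂ - F s₂ = ∑ j ∈ Finset.range (n+1),
        ((∫ s₁ in a j..a (j+1), e s₁ * k s₂ s₁) - q j * κ j s₂) := by
      rw [hGsum s₂, hFdef, ← Finset.sum_sub_distrib]
    have hDj : ∀ j ∈ Finset.range (n+1),
        |(∫ s₁ in a j..a (j+1), e s₁ * k s₂ s₁) - q j * κ j s₂|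
        ≤ M'' * δ * (δ * (k s₂ (a (j+1)) - k s₂ (a j))) := by
      intro j hj
      have hjn : j ≤ n := Nat.lt_succ_iff.mp (Finset.mem_range.mp hj)
      have hajt : a (j+1) ≤ t := ha_le_t (j+1) (by omega)
      have i1 := hekint s₂ (a j) (a (j+1))
      have i2 := (hkint s₂ (a j) (a (j+1))).const_mul (q j)
      have i3 : IntervalIntegrable (fun s₁ => k s₂ (a j) * e s₁) volume (a j) (a (j+1)) :=
        (hecont.intervalIntegrable _ _).const_mul _
      have i4 : IntervalIntegrable (fun _ => q j * k s₂ (a j)) volume (a j) (a (j+1)) :=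
        intervalIntegrable_const
      have hrep : (∫ s₁ in a j..a (j+1), e s₁ * k s₂ s₁) - q j * κ j s₂
          = ∫ s₁ in a j..a (j+1), (e s₁ - q j) * (k s₂ s₁ - k s₂ (a j)) := by
        have hexp : (fun s₁ => (e s₁ - q j) * (k s₂ s₁ - k s₂ (a j)))
            = fun s₁ => (e s₁ * k s₂ s₁ - q j * k s₂ s₁)
              - (k s₂ (a j) * e s₁ - q j * k s₂ (a j)) := funext fun s₁ => by ring
        rw [hexp, intervalIntegral.integral_sub (i1.sub i2) (i3.sub i4),
          intervalIntegral.integral_sub i1 i2,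
          intervalIntegral.integral_sub i3 i4,
          intervalIntegral.integral_const_mul,
          intervalIntegral.integral_const_mul,
          intervalIntegral.integral_const, hFTC j hjn, haδ j, smul_eq_mul]
        have : (∫ s₁ in a j..a (j+1), k s₂ s₁) = κ j s₂ := by rw [hκdef]
        rw [this]
        ring
      have hint5 : IntervalIntegrable
          (fun s₁ => (e s₁ - q j) * (k s₂ s₁ - k s₂ (a j))) volume (a j) (a (j+1)) :=
        ((hkint s₂ (a j) (a (j+1))).sub intervalIntegrable_const).continuousOn_mul
          (hecont.sub continuous_const).continuousOn
      have hb : |∫ s₁ in a j..a (j+1), (e s₁ - q j) * (k s₂ s₁ - k s₂ (a j))|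
          ≤ ∫ s₁ in a j..a (j+1), (M'' * δ) * (k s₂ s₁ - k s₂ (a j)) := by
        refine (intervalIntegral.abs_integral_le_integral_abs (hamono j)).trans ?_
        apply intervalIntegral.integral_mono_on (hamono j) hint5.abs
          (((hkint s₂ (a j) (a (j+1))).sub intervalIntegrable_const).const_mul _)
        intro s₁ hs₁
        have hknn : 0 ≤ k s₂ s₁ - k s₂ (a j) :=
          sub_nonneg.2 (hk_mono1 hs₂t hs₁.1 (hs₁.2.trans hajt))
        rw [abs_mul, abs_of_nonneg hknn]
        exact mul_le_mul_of_nonneg_right (havg j hjn s₁ hs₁) hknn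
      have hb2 : ∫ s₁ in a j..a (j+1), (M'' * δ) * (k s₂ s₁ - k s₂ (a j))
          ≤ M'' * δ * (δ * (k s₂ (a (j+1)) - k s₂ (a j))) := by
        rw [intervalIntegral.integral_const_mul]
        apply mul_le_mul_of_nonneg_left _ (by positivity)
        have hgg : (∫ s₁ in a j..a (j+1), (k s₂ s₁ - k s₂ (a j)))
            = (∫ s₁ in a j..a (j+1), k s₂ s₁) - δ * k s₂ (a j) := by
          rw [intervalIntegral.integral_sub (hkint s₂ _ _) intervalIntegrable_const,
            intervalIntegral.integral_const, haδ j, smul_eq_mul]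
        have hκle : (∫ s₁ in a j..a (j+1), k s₂ s₁) ≤ δ * k s₂ (a (j+1)) := by
          have := intervalIntegral.integral_mono_on (hamono j) (hkint s₂ _ _)
            (_root_.intervalIntegrable_const (c := k s₂ (a (j+1))))
            (fun s₁ hs₁ => hk_mono1 hs₂t hs₁.2 hajt)
          rwa [intervalIntegral.integral_const, haδ j, smul_eq_mul] at this
        rw [hgg]
        linarith
      rw [hrep]
      exact hb.trans hb2
    have hsum := Finset.sum_le_sum hDj
    have htel : ∑ j ∈ Finset.range (n+1), (M'' * δ * (δ * (k s₂ (a (j+1)) - k s₂ (a j))))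
        = M'' * δ * δ * (k s₂ (a (n+1)) - k s₂ (a 0)) := by
      rw [show (fun j => M'' * δ * (δ * (k s₂ (a (j+1)) - k s₂ (a j))))
          = fun j => (M'' * δ * δ) * ((fun j' => k s₂ (a j')) (j+1)
            - (fun j' => k s₂ (a j')) j) from funext fun j => by ring]
      rw [← Finset.mul_sum, Finset.sum_range_sub (fun j' => k s₂ (a j'))]
    have hkt : k s₂ (a (n+1)) = (t - s₂) ^ (-β) := by
      rw [hat]; simp only [hkdef]
      rw [show 2 * ((n:ℝ)+1) * δ - t - s₂ = t - s₂ by rw [htdef]; ring]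
    have hk0 : 0 ≤ k s₂ (a 0) := by
      rw [ha0]; exact hk_nonneg hs₂t.le ht0.le
    calc |G s₂ - F s₂| ≤ ∑ j ∈ Finset.range (n+1),
          |(∫ s₁ in a j..a (j+1), e s₁ * k s₂ s₁) - q j * κ j s₂| := by
          rw [hGF]; exact Finset.abs_sum_le_sum_abs _ _
      _ ≤ ∑ j ∈ Finset.range (n+1), (M'' * δ * (δ * (k s₂ (a (j+1)) - k s₂ (a j)))) := hsum
      _ = M'' * δ * δ * (k s₂ (a (n+1)) - k s₂ (a 0)) := htel
      _ ≤ M'' * δ^2 * (t - s₂) ^ (-β) := by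
          rw [hkt, pow_two]
          nlinarith [mul_nonneg (mul_nonneg (mul_nonneg hM''0.le hδ.le) hδ.le) hk0]
  have hae_ne : ∀ᵐ s₂ : ℝ ∂volume, s₂ ≠ t := by
    simp only [MeasureTheory.ae_iff, not_not]
    simpa using MeasureTheory.measure_singleton (μ := volume) t
  have hE1 : |∫ s₂ in (0:ℝ)..t, (e s₂ * G s₂ - e s₂ * F s₂)|
      ≤ M' * M'' * δ^2 * t^(1-β) / (1-β) := by
    have hintL : IntervalIntegrable (fun s₂ => e s₂ * G s₂ - e s₂ * F s₂) volume 0 t :=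
      heGint.sub heFint
    have h1 : |∫ s₂ in (0:ℝ)..t, (e s₂ * G s₂ - e s₂ * F s₂)|
        ≤ ∫ s₂ in (0:ℝ)..t, |e s₂ * G s₂ - e s₂ * F s₂| :=
      intervalIntegral.abs_integral_le_integral_abs ht0.le
    have h2 : ∫ s₂ in (0:ℝ)..t, |e s₂ * G s₂ - e s₂ * F s₂|
        ≤ ∫ s₂ in (0:ℝ)..t, (M' * M'' * δ^2) * (t - s₂) ^ (-β) := by
      apply intervalIntegral.integral_mono_ae_restrict ht0.le hintL.abs
        ((aux_ker_int β hβ1 t 0 t).const_mul _)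
      refine (ae_restrict_iff' measurableSet_Icc).2 ?_
      filter_upwards [hae_ne] with s₂ hne hmem
      have hlt : s₂ < t := lt_of_le_of_ne hmem.2 hne
      have h3 : |e s₂ * G s₂ - e s₂ * F s₂| = |e s₂| * |G s₂ - F s₂| := by
        rw [← abs_mul, mul_sub]
      rw [h3]
      calc |e s₂| * |G s₂ - F s₂| ≤ M' * (M'' * δ^2 * (t - s₂) ^ (-β)) :=
            mul_le_mul (hebd _) (hD s₂ ⟨hmem.1, hlt⟩) (abs_nonneg _) hM'0.le
        _ = (M' * M'' * δ^2) * (t - s₂) ^ (-β) := by ring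
    have h4 : ∫ s₂ in (0:ℝ)..t, (M' * M'' * δ^2) * (t - s₂) ^ (-β)
        = M' * M'' * δ^2 * (t^(1-β)) / (1-β) := by
      rw [intervalIntegral.integral_const_mul, aux_ker_val β hβ1 t 0 t]
      rw [sub_self, sub_zero, Real.zero_rpow (by linarith : (1:ℝ) - β ≠ 0), sub_zero]
      ring
    calc |∫ s₂ in (0:ℝ)..t, (e s₂ * G s₂ - e s₂ * F s₂)|
        ≤ ∫ s₂ in (0:ℝ)..t, |e s₂ * G s₂ - e s₂ * F s₂| := h1
      _ ≤ ∫ s₂ in (0:ℝ)..t, (M' * M'' * δ^2) * (t - s₂) ^ (-β) := h2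
      _ = M' * M'' * δ^2 * t^(1-β) / (1-β) := h4
  -- the E2 bound
  have hsumκ : ∀ S, ∑ j ∈ Finset.range (n+1), κ j S = ∫ s₁ in (0:ℝ)..t, k S s₁ := by
    intro S
    simp only [hκdef]
    rw [intervalIntegral.sum_integral_adjacent_intervals (fun j _ => hkint S _ _), ha0, hat]
  have hE2 : ∀ i ≤ n, |∫ s₂ in a i..a (i+1), (e s₂ - q i) * F s₂|
      ≤ M' * M'' * δ^2 * δ^(1-β) / (1-β) := by
    intro i hi
    have hait : a (i+1) ≤ t := ha_le_t (i+1) (by omega)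
    have hzero : ∫ s₂ in a i..a (i+1), (e s₂ - q i) = 0 := by
      rw [intervalIntegral.integral_sub (hecont.intervalIntegrable _ _)
        intervalIntegrable_const, hFTC i hi, intervalIntegral.integral_const, haδ i,
        smul_eq_mul]
      ring
    have hcont2 : Continuous fun s₂ => (e s₂ - q i) * (F s₂ - F (a i)) :=
      (hecont.sub continuous_const).mul (hFcont.sub continuous_const)
    have hrep : (∫ s₂ in a i..a (i+1), (e s₂ - q i) * F s₂)
        = ∫ s₂ in a i..a (i+1), (e s₂ - q i) * (F s₂ - F (a i)) := by
      rw [show (fun s₂ => (e s₂ - q i) * (F s₂ - F (a i)))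
          = fun s₂ => (e s₂ - q i) * F s₂ - F (a i) * (e s₂ - q i) from
          funext fun s₂ => by ring]
      rw [intervalIntegral.integral_sub (f := fun s₂ => (e s₂ - q i) * F s₂)
        (g := fun s₂ => F (a i) * (e s₂ - q i))
        (((hecont.sub continuous_const).mul hFcont).intervalIntegrable _ _)
        (((hecont.sub continuous_const).intervalIntegrable _ _).const_mul _),
        intervalIntegral.integral_const_mul, hzero, mul_zero, sub_zero]
    -- pointwise bound on the oscillation of F
    have hFd : ∀ s₂, a i ≤ s₂ → s₂ ≤ a (i+1) → s₂ < t →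
        |F s₂ - F (a i)| ≤ M' * (δ^(1-β) / (1-β)) := by
      intro s₂ hsl hsr hslt
      have hait' : a i < t := lt_of_le_of_lt hsl hslt
      have hκd : ∀ j ∈ Finset.range (n+1), 0 ≤ κ j s₂ - κ j (a i) := by
        intro j hj
        have hjn : j ≤ n := Nat.lt_succ_iff.mp (Finset.mem_range.mp hj)
        apply sub_nonneg.2
        apply intervalIntegral.integral_mono_on (hamono j) (hkint _ _ _) (hkint _ _ _)
        intro s₁ hs₁
        exact hk_mono2 (hs₁.2.trans (ha_le_t (j+1) (by omega))) hsl hslt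
      have h4 : |F s₂ - F (a i)|
          ≤ M' * ∑ j ∈ Finset.range (n+1), (κ j s₂ - κ j (a i)) := by
        rw [hFdef]
        simp only
        rw [← Finset.sum_sub_distrib]
        refine (Finset.abs_sum_le_sum_abs _ _).trans ?_
        rw [Finset.mul_sum]
        apply Finset.sum_le_sum
        intro j hj
        have hjn : j ≤ n := Nat.lt_succ_iff.mp (Finset.mem_range.mp hj)
        rw [show q j * κ j s₂ - q j * κ j (a i) = q j * (κ j s₂ - κ j (a i)) by ring,
          abs_mul, abs_of_nonneg (hκd j hj)]
        exact mul_le_mul_of_nonneg_right (hqbd j hjn) (hκd j hj)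
      have h5 : ∑ j ∈ Finset.range (n+1), (κ j s₂ - κ j (a i))
          = (∫ s₁ in (0:ℝ)..t, k s₂ s₁) - ∫ s₁ in (0:ℝ)..t, k (a i) s₁ := by
        rw [Finset.sum_sub_distrib, hsumκ, hsumκ]
      have h6 : (∫ s₁ in (0:ℝ)..t, k s₂ s₁) - (∫ s₁ in (0:ℝ)..t, k (a i) s₁)
          ≤ δ^(1-β) / (1-β) := by
        rw [hkval s₂ 0 t, hkval (a i) 0 t]
        rw [show 2*t - s₂ - t = t - s₂ by ring, show 2*t - a i - t = t - a i by ring,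
          sub_zero, sub_zero]
        have h7 : (2*t - s₂) ^ (1-β) ≤ (2*t - a i) ^ (1-β) :=
          Real.rpow_le_rpow (by linarith) (by linarith) hp0.le
        have h8 : (t - a i) ^ (1-β) ≤ (t - s₂) ^ (1-β) + (s₂ - a i) ^ (1-β) := by
          have h8' := aux_subadd (1-β) (t - s₂) (s₂ - a i) hp0.le (by linarith)
            (by linarith) (by linarith)
          rw [show t - s₂ + (s₂ - a i) = t - a i by ring] at h8'
          exact h8'
        have h9 : (s₂ - a i) ^ (1-β) ≤ δ^(1-β) := by
          apply Real.rpow_le_rpow (by linarith) _ hp0.le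
          have := haδ i; linarith
        rw [div_sub_div_same]
        exact (div_le_div_iff_of_pos_right hp0).mpr (by linarith)
      calc |F s₂ - F (a i)| ≤ M' * ∑ j ∈ Finset.range (n+1), (κ j s₂ - κ j (a i)) := h4
        _ ≤ M' * (δ^(1-β) / (1-β)) := by
            apply mul_le_mul_of_nonneg_left _ hM'0.le
            rw [h5]; exact h6
    -- integrate the pointwise bound
    rw [hrep]
    have hb1 : |∫ s₂ in a i..a (i+1), (e s₂ - q i) * (F s₂ - F (a i))|
        ≤ ∫ s₂ in a i..a (i+1), |(e s₂ - q i) * (F s₂ - F (a i))| :=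
      intervalIntegral.abs_integral_le_integral_abs (hamono i)
    have hb2 : ∫ s₂ in a i..a (i+1), |(e s₂ - q i) * (F s₂ - F (a i))|
        ≤ ∫ s₂ in a i..a (i+1), (M'' * δ) * (M' * (δ^(1-β) / (1-β))) := by
      apply intervalIntegral.integral_mono_ae_restrict (hamono i)
        (hcont2.abs.intervalIntegrable _ _) intervalIntegrable_const
      refine (ae_restrict_iff' measurableSet_Icc).2 ?_
      filter_upwards [hae_ne] with s₂ hne hmem
      have hslt : s₂ < t := lt_of_le_of_ne (hmem.2.trans hait) hne
      rw [abs_mul]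
      exact mul_le_mul (havg i hi s₂ hmem) (hFd s₂ hmem.1 hmem.2 hslt) (abs_nonneg _)
        (by positivity)
    have hb3 : ∫ s₂ in a i..a (i+1), (M'' * δ) * (M' * (δ^(1-β) / (1-β)))
        = δ * ((M'' * δ) * (M' * (δ^(1-β) / (1-β)))) := by
      rw [intervalIntegral.integral_const, haδ i, smul_eq_mul]
    calc |∫ s₂ in a i..a (i+1), (e s₂ - q i) * (F s₂ - F (a i))|
        ≤ ∫ s₂ in a i..a (i+1), |(e s₂ - q i) * (F s₂ - F (a i))| := hb1
      _ ≤ ∫ s₂ in a i..a (i+1), (M'' * δ) * (M' * (δ^(1-β) / (1-β))) := hb2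
      _ = δ * ((M'' * δ) * (M' * (δ^(1-β) / (1-β)))) := hb3
      _ = M' * M'' * δ^2 * δ^(1-β) / (1-β) := by ring
  -- decomposition
  have hIcct : Icc (0:ℝ) t ⊆ Icc 0 T := Icc_subset_Icc le_rfl htT
  have hint_eq : (∫ s₂ in (0:ℝ)..t, ∫ s₁ in (0:ℝ)..t,
        ε' s₁ * ε' s₂ * (2 * ((n:ℝ) + 1) * δ - s₁ - s₂) ^ (-β))
      = ∫ s₂ in (0:ℝ)..t, e s₂ * G s₂ := by
    apply intervalIntegral.integral_congr
    intro s₂ hs₂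
    rw [Set.uIcc_of_le ht0.le] at hs₂
    simp only
    have inner : (∫ s₁ in (0:ℝ)..t, ε' s₁ * ε' s₂ * (2 * ((n:ℝ) + 1) * δ - s₁ - s₂) ^ (-β))
        = ∫ s₁ in (0:ℝ)..t, e s₂ * (e s₁ * k s₂ s₁) := by
      apply intervalIntegral.integral_congr
      intro s₁ hs₁
      rw [Set.uIcc_of_le ht0.le] at hs₁
      simp only [hkdef]
      rw [heε s₁ (hIcct hs₁), heε s₂ (hIcct hs₂)]
      ring
    rw [inner, intervalIntegral.integral_const_mul]
  have hsum_eq : (∑ i ∈ Finset.range (n + 1), ∑ j ∈ Finset.range (n + 1),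
        ((ε (((i:ℝ) + 1) * δ) - ε ((i:ℝ) * δ)) *
            (ε (((j:ℝ) + 1) * δ) - ε ((j:ℝ) * δ)) / δ ^ 2) *
          ∫ s₂ in ((i:ℝ) * δ)..(((i:ℝ) + 1) * δ),
            ∫ s₁ in ((j:ℝ) * δ)..(((j:ℝ) + 1) * δ),
              (2 * ((n:ℝ) + 1) * δ - s₁ - s₂) ^ (-β))
      = ∑ i ∈ Finset.range (n+1), q i * ∑ j ∈ Finset.range (n+1),
          q j * ∫ s₂ in a i..a (i+1), κ j s₂ := by
    apply Finset.sum_congr rfl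
    intro i _
    rw [Finset.mul_sum]
    apply Finset.sum_congr rfl
    intro j _
    rw [show ((i:ℝ)+1) * δ = a (i+1) from (hasucc i).symm,
      show ((j:ℝ)+1) * δ = a (j+1) from (hasucc j).symm,
      show (i:ℝ) * δ = a i from rfl, show (j:ℝ) * δ = a j from rfl]
    have hin : (∫ s₂ in a i..a (i+1), ∫ s₁ in a j..a (j+1),
        (2 * ((n:ℝ) + 1) * δ - s₁ - s₂) ^ (-β))
        = ∫ s₂ in a i..a (i+1), κ j s₂ := by
      simp only [hκdef, hkdef]
    rw [hin]
    simp only [hqdef]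
    field_simp
  have hE2rep : ∀ i ∈ Finset.range (n+1),
      (∫ s₂ in a i..a (i+1), (e s₂ - q i) * F s₂)
      = (∫ s₂ in a i..a (i+1), e s₂ * F s₂)
        - q i * ∑ j ∈ Finset.range (n+1), q j * ∫ s₂ in a i..a (i+1), κ j s₂ := by
    intro i _
    rw [show (fun s₂ => (e s₂ - q i) * F s₂)
        = fun s₂ => e s₂ * F s₂ - q i * F s₂ from funext fun s₂ => by ring]
    rw [intervalIntegral.integral_sub (f := fun s₂ => e s₂ * F s₂) (g := fun s₂ => q i * F s₂)
      ((hecont.mul hFcont).intervalIntegrable _ _)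
      ((hFcont.intervalIntegrable _ _).const_mul _), intervalIntegral.integral_const_mul]
    congr 1
    rw [mul_eq_mul_left_iff]
    left
    have hFi : (fun s₂ => F s₂) = fun s₂ => ∑ j ∈ Finset.range (n+1), q j * κ j s₂ := by
      rw [hFdef]
    rw [hFi, intervalIntegral.integral_finset_sum (f := fun j s₂ => q j * κ j s₂)
      (fun j _ => (continuous_const.mul (hκcont j)).intervalIntegrable _ _)]
    apply Finset.sum_congr rfl
    intro j _
    rw [intervalIntegral.integral_const_mul]
  have hsumeF : ∑ i ∈ Finset.range (n+1), ∫ s₂ in a i..a (i+1), e s₂ * F s₂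
      = ∫ s₂ in (0:ℝ)..t, e s₂ * F s₂ := by
    rw [← ha0, ← hat]
    exact intervalIntegral.sum_integral_adjacent_intervals
      (fun i _ => (hecont.mul hFcont).intervalIntegrable _ _)
  have hsplit : (∫ s₂ in (0 : ℝ)..t,
          ∫ s₁ in (0 : ℝ)..t,
            ε' s₁ * ε' s₂ * (2 * ((n : ℝ) + 1) * δ - s₁ - s₂) ^ (-β))
        - ∑ i ∈ Finset.range (n + 1), ∑ j ∈ Finset.range (n + 1),
            ((ε (((i : ℝ) + 1) * δ) - ε ((i : ℝ) * δ)) *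
                (ε (((j : ℝ) + 1) * δ) - ε ((j : ℝ) * δ)) / δ ^ 2) *
              ∫ s₂ in ((i : ℝ) * δ)..(((i : ℝ) + 1) * δ),
                ∫ s₁ in ((j : ℝ) * δ)..(((j : ℝ) + 1) * δ),
                  (2 * ((n : ℝ) + 1) * δ - s₁ - s₂) ^ (-β)
      = (∫ s₂ in (0:ℝ)..t, (e s₂ * G s₂ - e s₂ * F s₂))
        + ∑ i ∈ Finset.range (n+1), ∫ s₂ in a i..a (i+1), (e s₂ - q i) * F s₂ := by
    rw [hint_eq, hsum_eq, intervalIntegral.integral_sub heGint heFint,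
      Finset.sum_congr rfl hE2rep, Finset.sum_sub_distrib, hsumeF]
    ring
  rw [hsplit]
  -- final assembly
  have habs : |(∫ s₂ in (0:ℝ)..t, (e s₂ * G s₂ - e s₂ * F s₂))
        + ∑ i ∈ Finset.range (n+1), ∫ s₂ in a i..a (i+1), (e s₂ - q i) * F s₂|
      ≤ |∫ s₂ in (0:ℝ)..t, (e s₂ * G s₂ - e s₂ * F s₂)|
        + ∑ i ∈ Finset.range (n+1), |∫ s₂ in a i..a (i+1), (e s₂ - q i) * F s₂| :=
    (abs_add_le _ _).trans (add_le_add_right (Finset.abs_sum_le_sum_abs _ _) _)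
  have hsums : ∑ i ∈ Finset.range (n+1), |∫ s₂ in a i..a (i+1), (e s₂ - q i) * F s₂|
      ≤ ((n:ℝ)+1) * (M' * M'' * δ^2 * δ^(1-β) / (1-β)) := by
    refine (Finset.sum_le_sum fun i hi =>
      hE2 i (Nat.lt_succ_iff.mp (Finset.mem_range.mp hi))).trans ?_
    rw [Finset.sum_const, Finset.card_range, nsmul_eq_mul]
    push_cast
    exact le_rfl
  -- numeric estimates
  have e1 : δ^(2:ℕ) = δ^(β:ℝ) * δ^((2:ℝ)-β) := by
    rw [← Real.rpow_add hδ, show β + ((2:ℝ)-β) = ((2:ℕ):ℝ) by push_cast; ring,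
      Real.rpow_natCast]
  have e2 : δ^(β:ℝ) ≤ T^(β:ℝ) := Real.rpow_le_rpow hδ.le hδT hβ0.le
  have e3 : t^(1-β) ≤ T^(1-β) := Real.rpow_le_rpow ht0.le htT hp0.le
  have e4 : T^(β:ℝ) * T^(1-β) = T := by
    rw [← Real.rpow_add hT, show β + (1-β) = (1:ℝ) by ring, Real.rpow_one]
  have e6 : δ * δ^(1-β) = δ^((2:ℝ)-β) := by
    nth_rewrite 1 [← Real.rpow_one δ]
    rw [← Real.rpow_add hδ, show (1:ℝ) + (1-β) = (2:ℝ)-β by ring]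
  have t4 : 0 ≤ δ^((2:ℝ)-β) := Real.rpow_nonneg hδ.le _
  have t1 : M' * M'' * δ^2 * t^(1-β)/(1-β) ≤ M'*M''*T*δ^((2:ℝ)-β)/(1-β) := by
    apply (div_le_div_iff_of_pos_right hp0).mpr
    rw [e1]
    calc M'*M''*(δ^(β:ℝ)*δ^((2:ℝ)-β))*t^(1-β) ≤ M'*M''*(T^(β:ℝ)*δ^((2:ℝ)-β))*T^(1-β) := by
          gcongr
      _ = M'*M''*T*δ^((2:ℝ)-β) := by
          rw [show M'*M''*(T^(β:ℝ)*δ^((2:ℝ)-β))*T^(1-β)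
            = M'*M''*(T^(β:ℝ)*T^(1-β))*δ^((2:ℝ)-β) by ring, e4]
  have t2 : ((n:ℝ)+1) * (M'*M''*δ^2*δ^(1-β)/(1-β)) ≤ M'*M''*T*δ^((2:ℝ)-β)/(1-β) := by
    have hre : ((n:ℝ)+1) * (M'*M''*δ^2*δ^(1-β)/(1-β))
        = M'*M''*((((n:ℝ)+1))*δ)*(δ*δ^(1-β))/(1-β) := by
      rw [pow_two]; ring
    rw [hre, e6, ← htdef]
    apply (div_le_div_iff_of_pos_right hp0).mpr
    have g6 : 0 ≤ M'*M'' := (mul_pos hM'0 hM''0).le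
    nlinarith [mul_nonneg g6 t4]
  have t5 : (2*T*M'*M''/(1-β) + 1) * δ^((2:ℝ)-β)
      = M'*M''*T*δ^((2:ℝ)-β)/(1-β) + M'*M''*T*δ^((2:ℝ)-β)/(1-β) + δ^((2:ℝ)-β) := by
    ring
  calc |(∫ s₂ in (0:ℝ)..t, (e s₂ * G s₂ - e s₂ * F s₂))
        + ∑ i ∈ Finset.range (n+1), ∫ s₂ in a i..a (i+1), (e s₂ - q i) * F s₂|
      ≤ |∫ s₂ in (0:ℝ)..t, (e s₂ * G s₂ - e s₂ * F s₂)|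
        + ∑ i ∈ Finset.range (n+1), |∫ s₂ in a i..a (i+1), (e s₂ - q i) * F s₂| := habs
    _ ≤ M' * M'' * δ^2 * t^(1-β) / (1-β)
        + ((n:ℝ)+1) * (M' * M'' * δ^2 * δ^(1-β) / (1-β)) := add_le_add hE1 hsums
    _ ≤ (2*T*M'*M''/(1-β) + 1) * δ^((2:ℝ)-β) := by rw [t5]; linarith [t1, t2, t4]
end

section
/- Let 𝔼 > 0, t > 0, and let ε : [0, t] → ℝ be continuously differentiable. For β ∈ (0, 1) define ψ_β(t) = (1/2) ∫₀^∞ Ẽ_β(z) · (∫₀^t exp(−(t − s)/z) ε′(s) ds)² dz with Ẽ_β(z) = 𝔼 / (Γ(1 − β) Γ(β) z^{β+1}). Then lim_{β → 0⁺} ψ_β(t) = (𝔼/2) · (ε(t) − ε(0))². In particular, if ε(0) = 0, the fractional free energy recovers the Hookean spring energy (𝔼/2) ε(t)² in the limit β → 0. -/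
open MeasureTheory Set Filter Real
open scoped Topology

namespace SBaux

set_option maxHeartbeats 800000 in
/-- Main auxiliary lemma: the limit of the unhalved integral. -/
lemma key (E t : ℝ) (hE : 0 < E) (ht : 0 < t)
    (ε ε' : ℝ → ℝ)
    (hε : ∀ s ∈ Set.Icc (0 : ℝ) t, HasDerivWithinAt ε (ε' s) (Set.Icc 0 t) s)
    (hε' : ContinuousOn ε' (Set.Icc 0 t)) :
    Tendsto (fun β : ℝ => ∫ z in Ioi (0:ℝ),
        (E / (Real.Gamma (1 - β) * Real.Gamma β * z ^ (β + 1))) *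
          (∫ s in (0:ℝ)..t, Real.exp (-(t - s) / z) * ε' s) ^ 2)
      (𝓝[>] (0:ℝ)) (𝓝 (E * (ε t - ε 0) ^ 2)) := by
  set g : ℝ → ℝ := fun z => ∫ s in (0:ℝ)..t, Real.exp (-(t - s) / z) * ε' s with hg_def
  set L : ℝ := ε t - ε 0 with hL_def
  -- a bound on ε'
  set g : ℝ → ℝ := fun z => ∫ s in (0:ℝ)..t, Real.exp (-(t - s) / z) * ε' s with hg_def
  set L : ℝ := ε t - ε 0 with hL_def
  obtain ⟨C, hC⟩ := isCompact_Icc.exists_bound_of_continuousOn hε'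
  have hC0 : 0 ≤ C := le_trans (norm_nonneg _) (hC 0 ⟨le_refl 0, ht.le⟩)
  -- interval integrability of the integrand
  have hε'int : IntervalIntegrable ε' volume 0 t := by
    apply ContinuousOn.intervalIntegrable
    rwa [uIcc_of_le ht.le]
  have hgint : ∀ z : ℝ, IntervalIntegrable (fun s => Real.exp (-(t - s) / z) * ε' s) volume 0 t := by
    intro z
    apply ContinuousOn.intervalIntegrable
    rw [uIcc_of_le ht.le]
    have hcontz : Continuous fun s : ℝ => Real.exp (-(t - s) / z) :=
      Real.continuous_exp.comp ((continuous_const.sub continuous_id).neg.div_const z)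
    exact hcontz.continuousOn.mul hε'
  -- FTC
  have hFTC : (∫ s in (0:ℝ)..t, ε' s) = L := by
    refine intervalIntegral.integral_eq_sub_of_hasDeriv_right_of_le ht.le
      (fun x hx => (hε x hx).continuousWithinAt) (fun x hx => ?_) hε'int
    exact (hε x ⟨hx.1.le, hx.2.le⟩).mono_of_mem_nhdsWithin
      (Icc_mem_nhdsGT_of_mem ⟨hx.1.le, hx.2⟩)
  -- the exponential integral
  have hexpint : ∀ z : ℝ, 0 < z →
      (∫ s in (0:ℝ)..t, Real.exp (-(t - s) / z)) = z - z * Real.exp (-t / z) := by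
    intro z hz
    have h1 : ∀ s ∈ uIcc (0:ℝ) t,
        HasDerivAt (fun s => z * Real.exp (-(t - s) / z)) (Real.exp (-(t - s) / z)) s := by
      intro s _
      have h2 : HasDerivAt (fun s : ℝ => -(t - s) / z) (1 / z) s := by
        have h3 : HasDerivAt (fun s : ℝ => -(t - s)) 1 s := by
          exact ((hasDerivAt_id s).const_sub t).neg.congr_deriv (by simp)
        simpa [one_div] using h3.div_const z
      have h4 := (h2.exp).const_mul z
      refine h4.congr_deriv ?_
      rw [mul_left_comm, one_div, mul_inv_cancel₀ hz.ne', mul_one]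
    have hcontz : Continuous fun s : ℝ => Real.exp (-(t - s) / z) :=
      Real.continuous_exp.comp ((continuous_const.sub continuous_id).neg.div_const z)
    have hci : IntervalIntegrable (fun s => Real.exp (-(t - s) / z)) volume 0 t :=
      hcontz.intervalIntegrable _ _
    rw [intervalIntegral.integral_eq_sub_of_hasDerivAt h1 hci]
    simp [mul_comm]
  -- |g z| ≤ C * z
  have hg_le_z : ∀ z : ℝ, 0 < z → |g z| ≤ C * z := by
    intro z hz
    have hbd : ‖g z‖ ≤ |∫ s in (0:ℝ)..t, Real.exp (-(t - s) / z) * C| := by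
      apply intervalIntegral.norm_integral_le_abs_of_norm_le
      · filter_upwards [ae_restrict_mem measurableSet_uIoc] with s hs
        rw [uIoc_of_le ht.le] at hs
        have hsIcc : s ∈ Icc (0:ℝ) t := ⟨hs.1.le, hs.2⟩
        have := hC s hsIcc
        rw [norm_mul, Real.norm_eq_abs, abs_of_pos (Real.exp_pos _)]
        exact mul_le_mul_of_nonneg_left this (Real.exp_pos _).le
      · have hcontz : Continuous fun s : ℝ => Real.exp (-(t - s) / z) * C :=
          (Real.continuous_exp.comp
            ((continuous_const.sub continuous_id).neg.div_const z)).mul continuous_const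
        exact hcontz.intervalIntegrable _ _
    have heq : (∫ s in (0:ℝ)..t, Real.exp (-(t - s) / z) * C)
        = (z - z * Real.exp (-t / z)) * C := by
      rw [intervalIntegral.integral_mul_const, hexpint z hz]
    have he1 : Real.exp (-t / z) ≤ 1 :=
      Real.exp_le_one_iff.mpr (div_nonpos_of_nonpos_of_nonneg (neg_nonpos.mpr ht.le) hz.le)
    have hnn : 0 ≤ z - z * Real.exp (-t / z) := by nlinarith
    calc |g z| = ‖g z‖ := (Real.norm_eq_abs _).symm
      _ ≤ |∫ s in (0:ℝ)..t, Real.exp (-(t - s) / z) * C| := hbd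
      _ = (z - z * Real.exp (-t / z)) * C := by rw [heq, abs_of_nonneg (by positivity)]
      _ ≤ C * z := by nlinarith [mul_nonneg hC0 (mul_nonneg hz.le (Real.exp_pos (-t / z)).le)]
  -- |g z| ≤ C * t
  have hg_le_t : ∀ z : ℝ, 0 < z → |g z| ≤ C * t := by
    intro z hz
    rw [← Real.norm_eq_abs]
    have := intervalIntegral.norm_integral_le_of_norm_le_const (C := C)
      (f := fun s => Real.exp (-(t - s) / z) * ε' s) (a := 0) (b := t) ?_
    · simpa only [sub_zero, abs_of_pos ht] using this
    · intro x hx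
      rw [uIoc_of_le ht.le] at hx
      have hxI : x ∈ Icc (0:ℝ) t := ⟨hx.1.le, hx.2⟩
      have hexple : Real.exp (-(t - x) / z) ≤ 1 :=
        Real.exp_le_one_iff.mpr (div_nonpos_of_nonpos_of_nonneg (neg_nonpos.mpr (by linarith [hx.2])) hz.le)
      rw [norm_mul, Real.norm_eq_abs, abs_of_pos (Real.exp_pos _)]
      calc Real.exp (-(t - x) / z) * |ε' x| ≤ 1 * |ε' x| :=
            mul_le_mul_of_nonneg_right hexple (abs_nonneg _)
        _ = ‖ε' x‖ := by rw [one_mul, Real.norm_eq_abs]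
        _ ≤ C := hC x hxI
  -- |g z - L| ≤ C * t^2 / z
  have hg_sub : ∀ z : ℝ, 0 < z → |g z - L| ≤ C * t ^ 2 / z := by
    intro z hz
    have hrepr : g z - L = ∫ s in (0:ℝ)..t, (Real.exp (-(t - s) / z) - 1) * ε' s := by
      rw [← hFTC, hg_def, ← intervalIntegral.integral_sub (hgint z) hε'int]
      congr 1; funext s; ring
    rw [hrepr, ← Real.norm_eq_abs]
    have hb := intervalIntegral.norm_integral_le_of_norm_le_const (C := C * t / z)
      (f := fun s => (Real.exp (-(t - s) / z) - 1) * ε' s) (a := 0) (b := t) ?_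
    · calc ‖∫ s in (0:ℝ)..t, (Real.exp (-(t - s) / z) - 1) * ε' s‖
          ≤ C * t / z * |t - 0| := hb
        _ = C * t ^ 2 / z := by rw [sub_zero, abs_of_pos ht]; ring
    · intro x hx
      rw [uIoc_of_le ht.le] at hx
      have hxI : x ∈ Icc (0:ℝ) t := ⟨hx.1.le, hx.2⟩
      have h0tx : 0 ≤ (t - x) / z := div_nonneg (by linarith [hx.2]) hz.le
      have habs : |Real.exp (-(t - x) / z) - 1| ≤ (t - x) / z := by
        rw [neg_div, abs_sub_comm, abs_of_nonneg (by linarith [Real.exp_le_one_iff.mpr (neg_nonpos.mpr h0tx)])]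
        have := Real.add_one_le_exp (-((t - x) / z))
        linarith
      rw [norm_mul, Real.norm_eq_abs, Real.norm_eq_abs]
      calc |Real.exp (-(t - x) / z) - 1| * |ε' x| ≤ ((t - x) / z) * C := by
            apply mul_le_mul habs _ (abs_nonneg _) h0tx
            rw [← Real.norm_eq_abs]; exact hC x hxI
        _ ≤ (t / z) * C := by
            have hdd : (t - x) / z ≤ t / z := by gcongr; linarith [hx.1]
            exact mul_le_mul_of_nonneg_right hdd hC0
        _ = C * t / z := by ring
  -- continuity of g on Ioi 0
  have hε'meas : AEStronglyMeasurable ε' (volume.restrict (Ioc 0 t)) :=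
    (hε'.mono Ioc_subset_Icc_self).aestronglyMeasurable measurableSet_Ioc
  have hg_cont : ContinuousOn g (Ioi 0) := by
    intro z₀ hz₀
    apply ContinuousAt.continuousWithinAt
    have hrepr : g = fun z => ∫ s in Ioc (0:ℝ) t, Real.exp (-(t - s) / z) * ε' s := by
      funext z
      exact intervalIntegral.integral_of_le ht.le
    rw [hrepr]
    refine continuousAt_of_dominated (bound := fun _ => C) ?_ ?_ ?_ ?_
    · filter_upwards with z
      have hcontz : Continuous fun s : ℝ => Real.exp (-(t - s) / z) :=
        Real.continuous_exp.comp ((continuous_const.sub continuous_id).neg.div_const z)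
      exact (hcontz.aestronglyMeasurable).mul hε'meas
    · filter_upwards [eventually_gt_nhds hz₀] with z hz
      filter_upwards [ae_restrict_mem measurableSet_Ioc] with s hs
      have hexple : Real.exp (-(t - s) / z) ≤ 1 :=
        Real.exp_le_one_iff.mpr (div_nonpos_of_nonpos_of_nonneg (neg_nonpos.mpr (by linarith [hs.2])) hz.le)
      rw [norm_mul, Real.norm_eq_abs, abs_of_pos (Real.exp_pos _)]
      calc Real.exp (-(t - s) / z) * ‖ε' s‖ ≤ 1 * ‖ε' s‖ :=
            mul_le_mul_of_nonneg_right hexple (norm_nonneg _)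
        _ = ‖ε' s‖ := one_mul _
        _ ≤ C := hC s ⟨hs.1.le, hs.2⟩
    · exact integrableOn_const measure_Ioc_lt_top.ne
    · filter_upwards with s
      have h1 : ContinuousAt (fun z : ℝ => -(t - s) / z) z₀ :=
        ContinuousAt.div continuousAt_const continuousAt_id (mem_Ioi.mp hz₀).ne'
      exact ((Real.continuous_exp.continuousAt.comp h1).mul continuousAt_const)
  -- g tends to L at infinity
  have hg_top : Tendsto g atTop (𝓝 L) := by
    have h0 : Tendsto (fun z => g z - L) atTop (𝓝 0) := by
      apply squeeze_zero_norm' (a := fun z => C * t ^ 2 / z)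
      · filter_upwards [eventually_gt_atTop (0:ℝ)] with z hz
        exact hg_sub z hz
      · exact Tendsto.div_atTop tendsto_const_nhds tendsto_id
    have := h0.add (tendsto_const_nhds (x := L))
    simpa using this
  -- g² tends to 0 at 0⁺
  have hg_zero : Tendsto (fun z => g z ^ 2) (𝓝[>] (0:ℝ)) (𝓝 0) := by
    apply squeeze_zero' (g := fun z => (C * z) ^ 2)
    · filter_upwards with z using sq_nonneg _
    · filter_upwards [self_mem_nhdsWithin] with z hz
      calc g z ^ 2 = |g z| ^ 2 := (sq_abs _).symm
        _ ≤ (C * z) ^ 2 := pow_le_pow_left₀ (abs_nonneg _) (hg_le_z z hz) 2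
    · have : Tendsto (fun z : ℝ => (C * z) ^ 2) (𝓝 0) (𝓝 ((C * 0) ^ 2)) :=
        Continuous.tendsto ((continuous_const.mul continuous_id).pow 2) 0
      simpa using this.mono_left nhdsWithin_le_nhds
  -- measurability of the substituted family
  have hg_meas : ∀ β : ℝ, 0 < β →
      AEStronglyMeasurable (fun u : ℝ => g (u ^ (-1 / β)) ^ 2) (volume.restrict (Ioi 0)) := by
    intro β hβ
    apply ContinuousOn.aestronglyMeasurable _ measurableSet_Ioi
    intro u hu
    have h1 : ContinuousWithinAt (fun u : ℝ => u ^ (-1 / β)) (Ioi 0) u :=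
      (Real.continuousAt_rpow_const u _ (Or.inl (ne_of_gt (mem_Ioi.mp hu)))).continuousWithinAt
    have hmaps : MapsTo (fun u : ℝ => u ^ (-1 / β)) (Ioi 0) (Ioi 0) :=
      fun v hv => mem_Ioi.2 (Real.rpow_pos_of_pos (mem_Ioi.mp hv) _)
    have h2 : ContinuousWithinAt (fun u : ℝ => g (u ^ (-1 / β))) (Ioi 0) u :=
      ContinuousWithinAt.comp (f := fun u : ℝ => u ^ (-1 / β)) (hg_cont _ (hmaps hu)) h1 hmaps
    exact h2.pow 2
  -- the dominating function
  set D : ℝ → ℝ := fun u => if u ≤ 1 then C ^ 2 * t ^ 2 else C ^ 2 * u ^ (-2 : ℝ) with hD_def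
  have hD_int : IntegrableOn D (Ioi 0) := by
    rw [← Ioc_union_Ioi_eq_Ioi (zero_le_one : (0:ℝ) ≤ 1)]
    apply IntegrableOn.union
    · apply IntegrableOn.congr_fun (f := fun _ => C ^ 2 * t ^ 2)
      · exact integrableOn_const measure_Ioc_lt_top.ne
      · intro u hu
        simp [hD_def, hu.2]
      · exact measurableSet_Ioc
    · apply IntegrableOn.congr_fun (f := fun u => C ^ 2 * u ^ (-2 : ℝ))
      · exact (integrableOn_Ioi_rpow_of_lt (by norm_num) one_pos).const_mul (C ^ 2)
      · intro u hu
        simp [hD_def, not_le.2 (mem_Ioi.mp hu)]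
      · exact measurableSet_Ioi
  -- domination
  have h_bound : ∀ᶠ β in 𝓝[>] (0:ℝ), ∀ᵐ u ∂(volume.restrict (Ioi 0)),
      ‖g (u ^ (-1 / β)) ^ 2‖ ≤ D u := by
    have h01 : (0:ℝ) ∈ Ico (0:ℝ) 1 := ⟨le_refl 0, zero_lt_one⟩
    filter_upwards [Icc_mem_nhdsGT_of_mem h01,
      self_mem_nhdsWithin] with β hβ1 hβpos
    replace hβpos : (0:ℝ) < β := hβpos
    filter_upwards [ae_restrict_mem measurableSet_Ioi] with u hu
    have hupos : (0:ℝ) < u := hu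
    have hzpos : (0:ℝ) < u ^ (-1 / β) := Real.rpow_pos_of_pos hupos _
    rw [Real.norm_eq_abs, abs_pow, sq_abs, ← sq_abs]
    by_cases hu1 : u ≤ 1
    · rw [hD_def]
      simp only [if_pos hu1]
      calc |g (u ^ (-1 / β))| ^ 2 ≤ (C * t) ^ 2 :=
            pow_le_pow_left₀ (abs_nonneg _) (hg_le_t _ hzpos) 2
        _ = C ^ 2 * t ^ 2 := by ring
    · rw [hD_def]
      simp only [if_neg hu1]
      push_neg at hu1
      have hexp : (-1 / β : ℝ) ≤ -1 := by
        rw [neg_div, neg_le_neg_iff, le_div_iff₀ hβpos, one_mul]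
        exact hβ1.2
      have hz_le : u ^ (-1 / β) ≤ u ^ (-1 : ℝ) :=
        Real.rpow_le_rpow_of_exponent_le hu1.le hexp
      have hinv : (u ^ (-1 : ℝ)) ^ 2 = u ^ (-2 : ℝ) := by
        rw [← Real.rpow_natCast (u ^ (-1 : ℝ)) 2, ← Real.rpow_mul hupos.le]
        norm_num
      calc |g (u ^ (-1 / β))| ^ 2 ≤ (C * u ^ (-1 / β)) ^ 2 :=
            pow_le_pow_left₀ (abs_nonneg _) (hg_le_z _ hzpos) 2
        _ ≤ (C * u ^ (-1 : ℝ)) ^ 2 := by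
            apply pow_le_pow_left₀ (by positivity)
            exact mul_le_mul_of_nonneg_left hz_le hC0
        _ = C ^ 2 * u ^ (-2 : ℝ) := by rw [mul_pow, hinv]
  -- pointwise limit
  have h_lim : ∀ᵐ u ∂(volume.restrict (Ioi 0)),
      Tendsto (fun β : ℝ => g (u ^ (-1 / β)) ^ 2) (𝓝[>] (0:ℝ))
        (𝓝 ((Ioo (0:ℝ) 1).indicator (fun _ => L ^ 2) u)) := by
    have hne1 : ∀ᵐ u ∂(volume.restrict (Ioi 0)), u ≠ (1:ℝ) := by
      apply ae_restrict_of_ae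
      rw [ae_iff]
      have hs : {a : ℝ | ¬ a ≠ 1} = {1} := by ext a; simp
      rw [hs]
      exact measure_singleton 1
    filter_upwards [ae_restrict_mem measurableSet_Ioi, hne1] with u hu hu1
    have hupos : (0:ℝ) < u := hu
    rcases lt_or_gt_of_ne hu1 with h | h
    · -- u < 1 : limit is L²
      rw [indicator_of_mem (show u ∈ Ioo (0:ℝ) 1 from ⟨hupos, h⟩)]
      have hz : Tendsto (fun β : ℝ => u ^ (-1 / β)) (𝓝[>] (0:ℝ)) atTop := by
        have hrw : (fun β : ℝ => u ^ (-1 / β)) =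
            fun β => Real.exp (-Real.log u * β⁻¹) := by
          funext β
          rw [Real.rpow_def_of_pos hupos]
          congr 1
          field_simp
        rw [hrw]
        apply Real.tendsto_exp_atTop.comp
        have hlog : 0 < -Real.log u := by
          have := Real.log_neg hupos h
          linarith
        exact tendsto_inv_nhdsGT_zero.const_mul_atTop hlog
      exact (hg_top.comp hz).pow 2
    · -- u > 1 : limit is 0
      rw [indicator_of_notMem (fun hmem => absurd hmem.2 (not_lt.2 h.le))]
      have hz : Tendsto (fun β : ℝ => u ^ (-1 / β)) (𝓝[>] (0:ℝ)) (𝓝[>] (0:ℝ)) := by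
        rw [tendsto_nhdsWithin_iff]
        constructor
        · have hrw : (fun β : ℝ => u ^ (-1 / β)) =
              fun β => Real.exp (-(Real.log u * β⁻¹)) := by
            funext β
            rw [Real.rpow_def_of_pos hupos]
            congr 1
            field_simp
          rw [hrw]
          apply Real.tendsto_exp_atBot.comp
          apply tendsto_neg_atTop_atBot.comp
          exact tendsto_inv_nhdsGT_zero.const_mul_atTop (Real.log_pos h)
        · filter_upwards with β
          exact mem_Ioi.2 (Real.rpow_pos_of_pos hupos _)
      exact hg_zero.comp hz
  -- value of the limit integral
  have hlimval : (∫ u in Ioi (0:ℝ), (Ioo (0:ℝ) 1).indicator (fun _ => L ^ 2) u) = L ^ 2 := by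
    rw [setIntegral_indicator measurableSet_Ioo]
    have hint : Ioi (0:ℝ) ∩ Ioo 0 1 = Ioo 0 1 := inter_eq_right.2 (fun x hx => hx.1)
    rw [hint, setIntegral_const, Real.volume_real_Ioo]
    simp
  -- the substituted integrals converge
  have hI : Tendsto (fun β : ℝ => ∫ u in Ioi (0:ℝ), g (u ^ (-1 / β)) ^ 2)
      (𝓝[>] (0:ℝ)) (𝓝 (L ^ 2)) := by
    rw [← hlimval]
    refine tendsto_integral_filter_of_dominated_convergence D ?_ h_bound hD_int h_lim
    filter_upwards [self_mem_nhdsWithin] with β hβ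
    exact hg_meas β hβ
  -- the change-of-variables identity
  have hsub : ∀ β : ℝ, β ∈ Ioo (0:ℝ) 1 →
      (∫ z in Ioi (0:ℝ), (E / (Real.Gamma (1 - β) * Real.Gamma β * z ^ (β + 1))) * g z ^ 2)
        = (E * Real.sin (π * β) / (π * β)) * ∫ u in Ioi (0:ℝ), g (u ^ (-1 / β)) ^ 2 := by
    intro β hβ
    have hβ0 : (0:ℝ) < β := hβ.1
    have hsin : 0 < Real.sin (π * β) :=
      Real.sin_pos_of_pos_of_lt_pi (mul_pos Real.pi_pos hβ0)
        (mul_lt_of_lt_one_right Real.pi_pos hβ.2)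
    have hΓ : Real.Gamma (1 - β) * Real.Gamma β = π / Real.sin (π * β) := by
      rw [mul_comm]
      exact Real.Gamma_mul_Gamma_one_sub β
    have hsubst := MeasureTheory.integral_comp_rpow_Ioi
      (fun y => g (y ^ (-1 / β)) ^ 2) (p := -β) (neg_ne_zero.2 hβ0.ne')
    have heq : ∀ z ∈ Ioi (0:ℝ),
        (E / (Real.Gamma (1 - β) * Real.Gamma β * z ^ (β + 1))) * g z ^ 2
          = (E * Real.sin (π * β) / (π * β)) *
            ((|(-β)| * z ^ ((-β) - 1)) • g ((z ^ (-β : ℝ)) ^ (-1 / β)) ^ 2) := by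
      intro z hz
      have hz0 : (0:ℝ) < z := hz
      have hid : (z ^ (-β : ℝ)) ^ (-1 / β) = z := by
        rw [← Real.rpow_mul hz0.le]
        have : (-β) * (-1 / β) = 1 := by field_simp
        rw [this, Real.rpow_one]
      rw [hid, smul_eq_mul, abs_neg, abs_of_pos hβ0, hΓ]
      have h1 : z ^ ((-β) - 1) = (z ^ (β + 1))⁻¹ := by
        rw [← Real.rpow_neg hz0.le]
        congr 1
        ring
      rw [h1]
      have hzp : (0:ℝ) < z ^ (β + 1) := Real.rpow_pos_of_pos hz0 _
      field_simp
    rw [setIntegral_congr_fun measurableSet_Ioi heq, MeasureTheory.integral_const_mul, hsubst]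
  -- limit of the prefactor
  have hc : Tendsto (fun β : ℝ => E * Real.sin (π * β) / (π * β)) (𝓝[>] (0:ℝ)) (𝓝 E) := by
    have hslope : Tendsto (fun x : ℝ => Real.sin x / x) (𝓝[≠] (0:ℝ)) (𝓝 1) := by
      have h := Real.hasDerivAt_sin 0
      rw [hasDerivAt_iff_tendsto_slope] at h
      simpa [slope_fun_def, Real.cos_zero, Real.sin_zero, div_eq_inv_mul] using h
    have hmap : Tendsto (fun β : ℝ => π * β) (𝓝[>] (0:ℝ)) (𝓝[≠] (0:ℝ)) := by
      rw [tendsto_nhdsWithin_iff]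
      constructor
      · have h1 : Tendsto (fun β : ℝ => π * β) (𝓝 0) (𝓝 (π * 0)) :=
          Continuous.tendsto (continuous_const.mul continuous_id) 0
        simpa using h1.mono_left nhdsWithin_le_nhds
      · filter_upwards [self_mem_nhdsWithin] with β hβ
        exact (mul_pos Real.pi_pos (mem_Ioi.mp hβ)).ne'
    have h2 := (hslope.comp hmap).const_mul E
    simpa [Function.comp, mul_div_assoc] using h2
  -- conclusion
  refine Tendsto.congr' ?_ (by simpa using hc.mul hI)
  have h01 : (0:ℝ) ∈ Ico (0:ℝ) 1 := ⟨le_refl 0, zero_lt_one⟩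
  filter_upwards [Ioo_mem_nhdsGT_of_mem h01] with β hβ
  exact (hsub β hβ).symm

end SBaux

/-- Hookean limit of the Scott-Blair free energy: for `ε` continuously
differentiable on `[0,t]`,
`lim_{β→0⁺} ψ_β(t) = (𝔼/2)(ε(t) - ε(0))²`, and in particular if `ε(0) = 0`
the limit is the Hookean spring energy `(𝔼/2) ε(t)²`. -/
theorem stmt14 (E t : ℝ) (hE : 0 < E) (ht : 0 < t)
    (ε ε' : ℝ → ℝ)
    (hε : ∀ s ∈ Set.Icc (0 : ℝ) t, HasDerivWithinAt ε (ε' s) (Set.Icc 0 t) s)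
    (hε' : ContinuousOn ε' (Set.Icc 0 t)) :
    Filter.Tendsto
      (fun β : ℝ => (1 / 2) * ∫ z in Set.Ioi (0 : ℝ),
        (E / (Real.Gamma (1 - β) * Real.Gamma β * z ^ (β + 1))) *
          (∫ s in (0 : ℝ)..t, Real.exp (-(t - s) / z) * ε' s) ^ 2)
      (nhdsWithin 0 (Set.Ioi 0))
      (nhds ((E / 2) * (ε t - ε 0) ^ 2)) ∧
    (ε 0 = 0 →
      Filter.Tendsto
        (fun β : ℝ => (1 / 2) * ∫ z in Set.Ioi (0 : ℝ),
          (E / (Real.Gamma (1 - β) * Real.Gamma β * z ^ (β + 1))) *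
            (∫ s in (0 : ℝ)..t, Real.exp (-(t - s) / z) * ε' s) ^ 2)
        (nhdsWithin 0 (Set.Ioi 0))
        (nhds ((E / 2) * ε t ^ 2))) := by
  have hmain := SBaux.key E t hE ht ε ε' hε hε'
  have h1 : Filter.Tendsto
      (fun β : ℝ => (1 / 2) * ∫ z in Set.Ioi (0 : ℝ),
        (E / (Real.Gamma (1 - β) * Real.Gamma β * z ^ (β + 1))) *
          (∫ s in (0 : ℝ)..t, Real.exp (-(t - s) / z) * ε' s) ^ 2)
      (nhdsWithin 0 (Set.Ioi 0))
      (nhds ((E / 2) * (ε t - ε 0) ^ 2)) := by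
    have := hmain.const_mul (1/2 : ℝ)
    simpa [mul_comm, mul_assoc, mul_left_comm, div_eq_mul_inv] using this
  refine ⟨h1, fun h0 => ?_⟩
  simpa [h0] using h1
end

section
/- Let 𝔼 > 0, t > 0, and let ε : [0, t] → ℝ be continuously differentiable. For β ∈ (0, 1) define ψ_β(t) = (1/2) ∫₀^∞ Ẽ_β(z) · (∫₀^t exp(−(t − s)/z) ε′(s) ds)² dz with Ẽ_β(z) = 𝔼 / (Γ(1 − β) Γ(β) z^{β+1}). Then lim_{β → 1⁻} ψ_β(t) = 0, i.e., the fractional free energy vanishes in the Newtonian dashpot limit. -/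
open MeasureTheory Set Real Filter

private lemma sb_inner_bound (t z M : ℝ) (ht : 0 < t) (hz : 0 < z) (ε' : ℝ → ℝ)
    (hε' : ContinuousOn ε' (Set.Icc 0 t)) (hM0 : 0 ≤ M)
    (hM : ∀ s ∈ Set.Icc (0:ℝ) t, |ε' s| ≤ M) :
    |∫ s in (0:ℝ)..t, Real.exp (-(t - s) / z) * ε' s| ≤ M * min t z := by
  have hexpc : Continuous fun s : ℝ => Real.exp (-(t - s) / z) := by continuity
  have hint : IntervalIntegrable (fun s => Real.exp (-(t - s) / z) * ε' s) volume 0 t :=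
    ((hexpc.continuousOn.mul hε')).intervalIntegrable_of_Icc ht.le
  have hexple : ∀ s ∈ Set.Icc (0:ℝ) t, Real.exp (-(t - s) / z) ≤ 1 := by
    intro s hs
    rw [Real.exp_le_one_iff]
    apply div_nonpos_of_nonpos_of_nonneg (by linarith [hs.2]) hz.le
  have b1 : |∫ s in (0:ℝ)..t, Real.exp (-(t - s) / z) * ε' s| ≤ M * t := by
    have := intervalIntegral.norm_integral_le_of_norm_le_const
      (C := M) (f := fun s => Real.exp (-(t - s) / z) * ε' s) (a := (0:ℝ)) (b := t) ?_
    · simpa [abs_of_pos ht, mul_comm] using this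
    · intro x hx
      rw [Set.uIoc_of_le ht.le] at hx
      have hx' : x ∈ Set.Icc (0:ℝ) t := ⟨hx.1.le, hx.2⟩
      rw [Real.norm_eq_abs, abs_mul, Real.abs_exp]
      calc Real.exp (-(t - x) / z) * |ε' x| ≤ 1 * M :=
            mul_le_mul (hexple x hx') (hM x hx') (abs_nonneg _) zero_le_one
        _ = M := one_mul M
  have hJ : (∫ s in (0:ℝ)..t, Real.exp (-(t - s) / z)) = z - z * Real.exp (-t / z) := by
    have hder : ∀ s ∈ Set.uIcc (0:ℝ) t,
        HasDerivAt (fun s => z * Real.exp (-(t - s) / z)) (Real.exp (-(t - s) / z)) s := by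
      intro s _
      have h1 : HasDerivAt (fun s : ℝ => -(t - s) / z) (1 / z) s := by
        simpa using (((hasDerivAt_id s).const_sub t).neg.div_const z)
      have h2 := (h1.exp).const_mul z
      refine h2.congr_deriv ?_
      field_simp
    have := intervalIntegral.integral_eq_sub_of_hasDerivAt hder
      (hexpc.intervalIntegrable 0 t)
    rw [this]
    simp [mul_comm]
  have b2 : |∫ s in (0:ℝ)..t, Real.exp (-(t - s) / z) * ε' s| ≤ M * z := by
    calc |∫ s in (0:ℝ)..t, Real.exp (-(t - s) / z) * ε' s|
        ≤ ∫ s in (0:ℝ)..t, |Real.exp (-(t - s) / z) * ε' s| :=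
          intervalIntegral.abs_integral_le_integral_abs ht.le
      _ ≤ ∫ s in (0:ℝ)..t, M * Real.exp (-(t - s) / z) := by
          apply intervalIntegral.integral_mono_on ht.le hint.abs
            (((continuous_const.mul hexpc)).intervalIntegrable 0 t)
          intro s hs
          rw [abs_mul, Real.abs_exp, mul_comm]
          exact mul_le_mul_of_nonneg_right (hM s hs) (Real.exp_nonneg _)
      _ = M * (z - z * Real.exp (-t / z)) := by
          rw [intervalIntegral.integral_const_mul, hJ]
      _ ≤ M * z := by
          apply mul_le_mul_of_nonneg_left _ hM0
          have := Real.exp_nonneg (-t / z)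
          nlinarith
  rcases le_total t z with h | h
  · rw [min_eq_left h]; exact b1
  · rw [min_eq_right h]; exact b2

private lemma sb_dom (t c M β : ℝ) (ht : 0 < t) (hc : 0 < c) (hM0 : 0 ≤ M)
    (hβ : β ∈ Set.Ioo (1/2 : ℝ) 1) :
    IntegrableOn (fun z => c / z ^ (β+1) * (M * min t z) ^ 2) (Set.Ioi (0:ℝ)) volume ∧
    (∫ z in Set.Ioi (0:ℝ), c / z ^ (β+1) * (M * min t z) ^ 2)
      ≤ c * M ^ 2 * (3 * (t + t ^ (3/2 : ℝ))) := by
  obtain ⟨hβ0, hβ1⟩ := hβ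
  have hβ0' : 0 < β := by linarith
  have heq1 : Set.EqOn (fun z => c / z ^ (β+1) * (M * min t z) ^ 2)
      (fun z => c * M ^ 2 * z ^ (1 - β)) (Set.Ioc 0 t) := by
    intro z hz
    have hz0 : (0:ℝ) < z := hz.1
    simp only [min_eq_right hz.2]
    have h2 : (z:ℝ) ^ (2:ℕ) = z ^ ((2:ℕ):ℝ) := (Real.rpow_natCast z 2).symm
    have : z ^ (1 - β) = z ^ (2:ℕ) / z ^ (β + 1) := by
      rw [h2, ← Real.rpow_sub hz0]
      norm_num
      ring_nf
    rw [this]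
    ring
  have heq2 : Set.EqOn (fun z => c / z ^ (β+1) * (M * min t z) ^ 2)
      (fun z => c * M ^ 2 * t ^ (2:ℕ) * z ^ (-(β+1))) (Set.Ioi t) := by
    intro z hz
    have hz0 : (0:ℝ) < z := ht.trans hz
    simp only [min_eq_left (le_of_lt (show t < z from hz))]
    rw [Real.rpow_neg hz0.le]
    field_simp
  have hi1 : IntegrableOn (fun z => c / z ^ (β+1) * (M * min t z) ^ 2) (Set.Ioc 0 t) volume := by
    refine IntegrableOn.congr_fun (f := fun z => c * M ^ 2 * z ^ (1 - β))
      (Integrable.const_mul ?_ (c * M ^ 2)) heq1.symm measurableSet_Ioc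
    rw [← IntegrableOn, ← intervalIntegrable_iff_integrableOn_Ioc_of_le ht.le]
    exact intervalIntegral.intervalIntegrable_rpow' (by linarith)
  have hi2 : IntegrableOn (fun z => c / z ^ (β+1) * (M * min t z) ^ 2) (Set.Ioi t) volume := by
    refine IntegrableOn.congr_fun (f := fun z => c * M ^ 2 * t ^ (2:ℕ) * z ^ (-(β+1)))
      (Integrable.const_mul ?_ (c * M ^ 2 * t ^ (2:ℕ))) heq2.symm measurableSet_Ioi
    exact (integrableOn_Ioi_rpow_of_lt (by linarith) ht)
  have hunion : Set.Ioc (0:ℝ) t ∪ Set.Ioi t = Set.Ioi 0 := Set.Ioc_union_Ioi_eq_Ioi ht.le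
  have hint : IntegrableOn (fun z => c / z ^ (β+1) * (M * min t z) ^ 2) (Set.Ioi (0:ℝ)) volume := by
    rw [← hunion]; exact hi1.union hi2
  refine ⟨hint, ?_⟩
  have hdisj : Disjoint (Set.Ioc (0:ℝ) t) (Set.Ioi t) := Set.Ioc_disjoint_Ioi le_rfl
  have hC0 : 0 ≤ t + t ^ (3/2 : ℝ) := by positivity
  have htC : t ^ ((2:ℝ) - β) ≤ t + t ^ (3/2 : ℝ) := by
    rcases le_total 1 t with h | h
    · have : t ^ ((2:ℝ) - β) ≤ t ^ (3/2 : ℝ) :=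
        Real.rpow_le_rpow_of_exponent_le h (by linarith)
      linarith [ht.le]
    · have : t ^ ((2:ℝ) - β) ≤ t ^ (1:ℝ) :=
        Real.rpow_le_rpow_of_exponent_ge ht h (by linarith)
      rw [Real.rpow_one] at this
      have := Real.rpow_nonneg ht.le (3/2 : ℝ)
      linarith
  have e1 : (∫ z in Set.Ioc (0:ℝ) t, c / z ^ (β+1) * (M * min t z) ^ 2)
      = c * M ^ 2 * (t ^ ((2:ℝ) - β) / (2 - β)) := by
    rw [setIntegral_congr_fun measurableSet_Ioc heq1, MeasureTheory.integral_const_mul,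
      ← intervalIntegral.integral_of_le ht.le,
      integral_rpow (Or.inl (by linarith)),
      Real.zero_rpow (by norm_num; intro h; linarith), sub_zero,
      show (1:ℝ) - β + 1 = 2 - β by ring]
  have e2 : (∫ z in Set.Ioi t, c / z ^ (β+1) * (M * min t z) ^ 2)
      = c * M ^ 2 * (t ^ ((2:ℝ) - β) / β) := by
    rw [setIntegral_congr_fun measurableSet_Ioi heq2, MeasureTheory.integral_const_mul,
      integral_Ioi_rpow_of_lt (by linarith) ht]
    have ht2 : (t:ℝ) ^ (2:ℕ) = t ^ ((2:ℕ):ℝ) := (Real.rpow_natCast t 2).symm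
    rw [show -(β+1) + 1 = -β by ring]
    rw [mul_assoc, ht2]
    rw [show (c * M ^ 2 : ℝ) * (t ^ ((2:ℕ):ℝ) * (-t ^ (-β) / -β))
        = c * M ^ 2 * (t ^ ((2:ℕ):ℝ) * t ^ (-β) / β) by field_simp]
    rw [← Real.rpow_add ht]
    norm_num [← sub_eq_add_neg]
  rw [← hunion, MeasureTheory.setIntegral_union hdisj measurableSet_Ioi hi1 hi2, e1, e2]
  have h1 : t ^ ((2:ℝ) - β) / (2 - β) ≤ t + t ^ (3/2 : ℝ) := by
    have := Real.rpow_nonneg ht.le ((2:ℝ) - β)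
    calc t ^ ((2:ℝ) - β) / (2 - β) ≤ t ^ ((2:ℝ) - β) := by
          apply div_le_self this (by linarith)
      _ ≤ _ := htC
  have h2 : t ^ ((2:ℝ) - β) / β ≤ 2 * (t + t ^ (3/2 : ℝ)) := by
    rw [div_le_iff₀ hβ0']
    nlinarith [Real.rpow_nonneg ht.le ((2:ℝ) - β)]
  have hcM : 0 ≤ c * M ^ 2 := by positivity
  nlinarith [mul_le_mul_of_nonneg_left h1 hcM, mul_le_mul_of_nonneg_left h2 hcM]

private lemma sb_main_bound (E t : ℝ) (hE : 0 < E) (ht : 0 < t) (ε' : ℝ → ℝ)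
    (hε' : ContinuousOn ε' (Set.Icc 0 t)) (M : ℝ) (hM0 : 0 ≤ M)
    (hM : ∀ s ∈ Set.Icc (0:ℝ) t, |ε' s| ≤ M) {β : ℝ} (hβ : β ∈ Set.Ioo (1/2 : ℝ) 1) :
    (1 / 2) * (∫ z in Set.Ioi (0 : ℝ),
        (E / (Real.Gamma (1 - β) * Real.Gamma β * z ^ (β + 1))) *
          (∫ s in (0 : ℝ)..t, Real.exp (-(t - s) / z) * ε' s) ^ 2)
      ≤ Real.sin (Real.pi * β) *
          (E * M ^ 2 * (3 * (t + t ^ (3/2 : ℝ))) / (2 * Real.pi)) := by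
  obtain ⟨hβ0, hβ1⟩ := hβ
  have hβ0' : 0 < β := by linarith
  have hΓβ : 0 < Real.Gamma β := Real.Gamma_pos_of_pos hβ0'
  have hΓ1β : 0 < Real.Gamma (1 - β) := Real.Gamma_pos_of_pos (by linarith)
  have hsin : 0 < Real.sin (Real.pi * β) := by
    apply Real.sin_pos_of_pos_of_lt_pi
    · positivity
    · nlinarith [Real.pi_pos]
  set c := E / (Real.Gamma (1 - β) * Real.Gamma β) with hc_def
  have hc : 0 < c := div_pos hE (mul_pos hΓ1β hΓβ)
  have hrefl : c = E * Real.sin (Real.pi * β) / Real.pi := by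
    have h := Real.Gamma_mul_Gamma_one_sub β
    rw [hc_def, mul_comm (Real.Gamma (1 - β)) (Real.Gamma β), h]
    field_simp
  obtain ⟨hdint, hdval⟩ := sb_dom t c M β ht hc hM0 ⟨hβ0, hβ1⟩
  have hle : (∫ z in Set.Ioi (0 : ℝ),
        (E / (Real.Gamma (1 - β) * Real.Gamma β * z ^ (β + 1))) *
          (∫ s in (0 : ℝ)..t, Real.exp (-(t - s) / z) * ε' s) ^ 2)
      ≤ ∫ z in Set.Ioi (0:ℝ), c / z ^ (β+1) * (M * min t z) ^ 2 := by
    apply MeasureTheory.integral_mono_of_nonneg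
    · rw [Filter.EventuallyLE, ae_restrict_iff' measurableSet_Ioi]
      filter_upwards with z hz
      have hz0 : (0:ℝ) < z := hz
      have : (0:ℝ) < z ^ (β + 1) := Real.rpow_pos_of_pos hz0 _
      positivity
    · exact hdint
    · rw [Filter.EventuallyLE, ae_restrict_iff' measurableSet_Ioi]
      filter_upwards with z hz
      have hz0 : (0:ℝ) < z := hz
      have hzp : (0:ℝ) < z ^ (β + 1) := Real.rpow_pos_of_pos hz0 _
      have hkey := sb_inner_bound t z M ht hz0 ε' hε' hM0 hM
      have hsq : (∫ s in (0 : ℝ)..t, Real.exp (-(t - s) / z) * ε' s) ^ 2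
          ≤ (M * min t z) ^ 2 := by
        rw [← sq_abs]
        apply pow_le_pow_left₀ (abs_nonneg _) hkey
      have hE' : E / (Real.Gamma (1 - β) * Real.Gamma β * z ^ (β + 1))
          = c / z ^ (β + 1) := by rw [hc_def, div_div]
      rw [hE']
      exact mul_le_mul_of_nonneg_left hsq (by positivity)
  calc (1 / 2) * (∫ z in Set.Ioi (0 : ℝ),
        (E / (Real.Gamma (1 - β) * Real.Gamma β * z ^ (β + 1))) *
          (∫ s in (0 : ℝ)..t, Real.exp (-(t - s) / z) * ε' s) ^ 2)
      ≤ (1 / 2) * (c * M ^ 2 * (3 * (t + t ^ (3/2 : ℝ)))) := by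
        apply mul_le_mul_of_nonneg_left (hle.trans hdval) (by norm_num)
    _ = Real.sin (Real.pi * β) *
          (E * M ^ 2 * (3 * (t + t ^ (3/2 : ℝ))) / (2 * Real.pi)) := by
        rw [hrefl]
        field_simp

private lemma sb_nonneg (E t : ℝ) (hE : 0 < E) (ε' : ℝ → ℝ) {β : ℝ}
    (hβ : β ∈ Set.Ioo (1/2 : ℝ) 1) :
    0 ≤ (1 / 2) * (∫ z in Set.Ioi (0 : ℝ),
        (E / (Real.Gamma (1 - β) * Real.Gamma β * z ^ (β + 1))) *
          (∫ s in (0 : ℝ)..t, Real.exp (-(t - s) / z) * ε' s) ^ 2) := by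
  obtain ⟨hβ0, hβ1⟩ := hβ
  have hΓβ : 0 < Real.Gamma β := Real.Gamma_pos_of_pos (by linarith)
  have hΓ1β : 0 < Real.Gamma (1 - β) := Real.Gamma_pos_of_pos (by linarith)
  apply mul_nonneg (by norm_num)
  apply MeasureTheory.setIntegral_nonneg measurableSet_Ioi
  intro z hz
  have hz0 : (0:ℝ) < z := hz
  have : (0:ℝ) < z ^ (β + 1) := Real.rpow_pos_of_pos hz0 _
  positivity

/-- Newtonian dashpot limit of the Scott-Blair free energy: for `ε`
continuously differentiable on `[0,t]`, `lim_{β→1⁻} ψ_β(t) = 0`. -/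
theorem stmt15 (E t : ℝ) (hE : 0 < E) (ht : 0 < t)
    (ε ε' : ℝ → ℝ)
    (hε : ∀ s ∈ Set.Icc (0 : ℝ) t, HasDerivWithinAt ε (ε' s) (Set.Icc 0 t) s)
    (hε' : ContinuousOn ε' (Set.Icc 0 t)) :
    Filter.Tendsto
      (fun β : ℝ => (1 / 2) * ∫ z in Set.Ioi (0 : ℝ),
        (E / (Real.Gamma (1 - β) * Real.Gamma β * z ^ (β + 1))) *
          (∫ s in (0 : ℝ)..t, Real.exp (-(t - s) / z) * ε' s) ^ 2)
      (nhdsWithin 1 (Set.Iio 1))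
      (nhds 0) := by
  obtain ⟨M₀, hM₀⟩ := isCompact_Icc.exists_bound_of_continuousOn hε'
  set M := max M₀ 0 with hMdef
  have hM0 : 0 ≤ M := le_max_right _ _
  have hM : ∀ s ∈ Set.Icc (0:ℝ) t, |ε' s| ≤ M := fun s hs =>
    (hM₀ s hs).trans (le_max_left _ _)
  have hmem : Set.Ioo (1/2 : ℝ) 1 ∈ nhdsWithin (1:ℝ) (Set.Iio 1) :=
    Ioo_mem_nhdsLT_of_mem (by constructor <;> norm_num)
  apply tendsto_of_tendsto_of_tendsto_of_le_of_le'
    (g := fun _ : ℝ => (0:ℝ))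
    (h := fun β : ℝ => Real.sin (Real.pi * β) *
      (E * M ^ 2 * (3 * (t + t ^ (3/2 : ℝ))) / (2 * Real.pi)))
  · exact tendsto_const_nhds
  · have hcont : Continuous fun β : ℝ => Real.sin (Real.pi * β) *
        (E * M ^ 2 * (3 * (t + t ^ (3/2 : ℝ))) / (2 * Real.pi)) := by
      continuity
    have h2 : Filter.Tendsto (fun β : ℝ => Real.sin (Real.pi * β) *
        (E * M ^ 2 * (3 * (t + t ^ (3/2 : ℝ))) / (2 * Real.pi)))
        (nhdsWithin 1 (Set.Iio 1)) (nhds (Real.sin (Real.pi * 1) *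
        (E * M ^ 2 * (3 * (t + t ^ (3/2 : ℝ))) / (2 * Real.pi)))) :=
      (hcont.tendsto 1).mono_left nhdsWithin_le_nhds
    simpa using h2
  · filter_upwards [hmem] with β hβ
    exact sb_nonneg E t hE ε' hβ
  · filter_upwards [hmem] with β hβ
    exact sb_main_bound E t hE ht ε' hε' M hM0 hM hβ
end
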